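/- arXiv:2501.18480 — 4 statements merged into one kernel-verified Lean document; each statement's English description precedes it below -/
import Mathlib

section
/- Let G be a finite group, N ⊴ G, and ψ ∈ Irr(N) invariant in G. Suppose ψ extends to an irreducible representation ψ̂ of G. Then the map θ̄ ↦ θ ⊗ ψ̂, where θ is the inflation of θ̄ ∈ Irr(G/N) to G, is a bijection from Irr(G/N) onto the set of irreducible representations of G whose restriction to N contains ψ. -/
open CategoryTheory
open scoped MonoidalCategory Classical

noncomputable def containsChar (H : Type) [Finite H] (f χ : H → ℂ) : Prop :=
  letI := Fintype.ofFinite H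
  ∑ h : H, f h * (starRingEnd ℂ) (χ h) ≠ 0

/-- The map `θ̄ ↦ θ ⊗ ψ̂` of Gallagher's theorem: inflate a representation of `G/N` to `G`
and tensor with the given extension `ψ̂`. -/
noncomputable def gallagherMap (G : Type) [Group G] (N : Subgroup G) [hN : N.Normal]
    (ψhat : FDRep ℂ G) (θ : FDRep ℂ (G ⧸ N)) : FDRep ℂ G :=
  (Action.res (FGModuleCat ℂ) (QuotientGroup.mk' N)).obj θ ⊗ ψhat

noncomputable section

namespace Gallagher

open Module FDRep Representation

variable {H : Type} [Group H] [Fintype H]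

lemma sum_char_eq (V W : FDRep ℂ H) :
    ∑ h : H, V.character h * W.character h⁻¹
      = (Fintype.card H : ℂ) * finrank ℂ (W ⟶ V) := by
  letI : Invertible (Fintype.card H : ℂ) :=
    invertibleOfNonzero (Nat.cast_ne_zero.mpr Fintype.card_ne_zero)
  have key : ⅟ (Fintype.card H : ℂ) • ∑ h : H, V.character h * W.character h⁻¹
      = (finrank ℂ (W ⟶ V) : ℂ) := by
    conv_lhs =>
      enter [2, 2, g]
      rw [mul_comm, ← FDRep.char_dual, ← Pi.mul_apply, ← FDRep.char_tensor]
      rw [FDRep.char_iso (FDRep.dualTensorIsoLinHom W.ρ V)]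
    rw [invOf_eq_inv, smul_eq_mul, Fintype.card_eq_nat_card]
    haveI : Invertible (Nat.card H : ℂ) := invertibleOfNonzero (Nat.cast_ne_zero.mpr Nat.card_pos.ne')
    rw [FDRep.average_char_eq_finrank_invariants]
    rw [show (FDRep.of (linHom W.ρ V.ρ)).ρ = linHom W.ρ V.ρ from FDRep.of_ρ' (linHom W.ρ V.ρ)]
    erw [(Representation.linHom.invariantsEquivFDRepHom W V).finrank_eq]
  calc ∑ h : H, V.character h * W.character h⁻¹
      = (Fintype.card H : ℂ) * (⅟ (Fintype.card H : ℂ) •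
          ∑ h : H, V.character h * W.character h⁻¹) := by
        rw [smul_eq_mul, ← mul_assoc, mul_invOf_self, one_mul]
    _ = (Fintype.card H : ℂ) * finrank ℂ (W ⟶ V) := by rw [key]

lemma conj_char (V : FDRep ℂ H) (h : H) :
    (starRingEnd ℂ) (V.character h) = V.character h⁻¹ := by
  classical
  set m := orderOf h with hm
  have hm0 : m ≠ 0 := (orderOf_pos h).ne'
  set f : Module.End ℂ V := V.ρ h with hf
  set g : Module.End ℂ V := V.ρ h⁻¹ with hg
  have hfg : g * f = 1 := by rw [hf, hg, ← map_mul, inv_mul_cancel, map_one]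
  have hgf : f * g = 1 := by rw [hf, hg, ← map_mul, mul_inv_cancel, map_one]
  have hfm : f ^ m = 1 := by rw [hf, ← map_pow, hm, pow_orderOf_eq_one, map_one]
  have hsq : Squarefree (Polynomial.X ^ m - 1 : Polynomial ℂ) :=
    (Polynomial.X_pow_sub_one_separable_iff.mpr
      (Nat.cast_ne_zero (R := ℂ) |>.mpr hm0)).squarefree
  have haev : (Polynomial.aeval f) (Polynomial.X ^ m - 1 : Polynomial ℂ) = 0 := by
    simp [hfm]
  have hss := Module.End.isSemisimple_of_squarefree_aeval_eq_zero hsq haev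
  have heig : ∀ μ : ℂ, f.maxGenEigenspace μ = f.eigenspace μ := fun μ =>
    hss.isFinitelySemisimple.maxGenEigenspace_eq_eigenspace μ
  have htop : ⨆ μ : ℂ, f.eigenspace μ = ⊤ := by
    simp_rw [← heig]; exact Module.End.iSup_maxGenEigenspace_eq_top f
  have hpow : ∀ (μ : ℂ) (v : V), v ∈ f.eigenspace μ → ∀ k : ℕ, (f ^ k) v = μ ^ k • v := by
    intro μ v hv k
    have hv' : f v = μ • v := Module.End.mem_eigenspace_iff.mp hv
    induction k with
    | zero => simp
    | succ k ih =>
        rw [pow_succ', pow_succ', Module.End.mul_apply, ih, map_smul, hv', smul_smul, mul_comm]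
  have hroot : ∀ μ : ℂ, f.eigenspace μ ≠ ⊥ → μ ^ m = 1 := by
    intro μ hne
    obtain ⟨v, hv, hv0⟩ := Submodule.exists_mem_ne_zero_of_ne_bot hne
    have h1 : (f ^ m) v = μ ^ m • v := hpow μ v hv m
    rw [hfm] at h1
    have : (μ ^ m - 1) • v = 0 := by
      rw [sub_smul, one_smul, ← h1]; simp
    rcases smul_eq_zero.mp this with h | h
    · exact sub_eq_zero.mp h
    · exact absurd h hv0
  have hsfin : {μ : ℂ | μ ^ m = 1}.Finite :=
    Set.Finite.ofFinset (Polynomial.nthRoots m (1 : ℂ)).toFinset (by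
      intro x
      simp [Polynomial.mem_nthRoots (Nat.pos_of_ne_zero hm0)])
  letI := hsfin.fintype
  set s := {μ : ℂ | μ ^ m = 1}
  let NN : s → Submodule ℂ V := fun μ => f.eigenspace (μ : ℂ)
  have indep : iSupIndep NN := (f.eigenspaces_iSupIndep).comp Subtype.val_injective
  have hsup : ⨆ μ : s, NN μ = ⊤ := by
    rw [← htop]
    apply le_antisymm
    · exact iSup_le fun μ => le_iSup f.eigenspace (μ : ℂ)
    · refine iSup_le fun μ => ?_
      by_cases hμ : μ ∈ s
      · exact le_iSup_of_le ⟨μ, hμ⟩ le_rfl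
      · have : f.eigenspace μ = ⊥ := by
          by_contra hh; exact hμ (hroot μ hh)
        rw [this]; exact bot_le
  have internal := DirectSum.isInternal_submodule_of_iSupIndep_of_iSup_eq_top indep hsup
  have hmapsf : ∀ μ : s, Set.MapsTo f (NN μ) (NN μ) := by
    intro μ v hv
    have : f v = (μ : ℂ) • v := Module.End.mem_eigenspace_iff.mp hv
    show f v ∈ f.eigenspace (μ : ℂ)
    rw [this]
    exact Submodule.smul_mem _ _ hv
  have hcomm : g * f = f * g := by rw [hfg, hgf]
  have hmapsg : ∀ μ : s, Set.MapsTo g (NN μ) (NN μ) := by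
    intro μ v hv
    have hv' : f v = (μ : ℂ) • v := Module.End.mem_eigenspace_iff.mp hv
    show g v ∈ f.eigenspace (μ : ℂ)
    rw [Module.End.mem_eigenspace_iff]
    have : f (g v) = g (f v) := by
      rw [← Module.End.mul_apply, ← Module.End.mul_apply, hcomm]
    rw [this, hv', map_smul]
  have hμ0 : ∀ μ : s, (μ : ℂ) ≠ 0 := by
    rintro ⟨μ, hμ⟩ h0
    have hμ : μ ^ m = 1 := hμ
    have h0' : μ = 0 := h0
    rw [h0'] at hμ
    simp [zero_pow hm0] at hμ
  have hgval : ∀ (μ : s) (v : V), v ∈ NN μ → g v = (μ : ℂ)⁻¹ • v := by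
    intro μ v hv
    have hv' : f v = (μ : ℂ) • v := Module.End.mem_eigenspace_iff.mp hv
    have h1 : g (f v) = v := by rw [← Module.End.mul_apply, hfg, Module.End.one_apply]
    rw [hv', map_smul] at h1
    rw [eq_inv_smul_iff₀ (hμ0 μ)]
    exact h1
  have t1 : LinearMap.trace ℂ V f = ∑ μ : s, (μ : ℂ) * finrank ℂ (NN μ) := by
    rw [LinearMap.trace_eq_sum_trace_restrict internal hmapsf]
    refine Finset.sum_congr rfl fun μ _ => ?_
    have : f.restrict (hmapsf μ) = (μ : ℂ) • (1 : Module.End ℂ (NN μ)) := by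
      ext ⟨v, hv⟩
      have : f v = (μ : ℂ) • v := Module.End.mem_eigenspace_iff.mp hv
      simp [Subtype.ext_iff]
      exact this
    rw [this, map_smul, LinearMap.trace_one, smul_eq_mul]
  have t2 : LinearMap.trace ℂ V g = ∑ μ : s, (μ : ℂ)⁻¹ * finrank ℂ (NN μ) := by
    rw [LinearMap.trace_eq_sum_trace_restrict internal hmapsg]
    refine Finset.sum_congr rfl fun μ _ => ?_
    have : g.restrict (hmapsg μ) = (μ : ℂ)⁻¹ • (1 : Module.End ℂ (NN μ)) := by
      ext ⟨v, hv⟩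
      simp [Subtype.ext_iff]
      exact hgval μ v hv
    rw [this, map_smul, LinearMap.trace_one, smul_eq_mul]
  have hconj : ∀ μ : s, (starRingEnd ℂ) (μ : ℂ) = (μ : ℂ)⁻¹ := by
    rintro ⟨μ, hμ⟩
    have hμ : μ ^ m = 1 := hμ
    have hns : Complex.normSq μ = 1 := by
      have h1 : (Complex.normSq μ) ^ m = 1 := by
        rw [← map_pow, hμ, map_one]
      have h0 : 0 ≤ Complex.normSq μ := Complex.normSq_nonneg μ
      rcases lt_trichotomy (Complex.normSq μ) 1 with hlt | heq | hgt
      · exact absurd h1 (by nlinarith [pow_lt_one₀ h0 hlt hm0])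
      · exact heq
      · exact absurd h1 (by nlinarith [one_lt_pow₀ hgt hm0])
    have : (starRingEnd ℂ) μ * μ = 1 := by
      rw [mul_comm, Complex.mul_conj, hns, Complex.ofReal_one]
    exact eq_inv_of_mul_eq_one_left this
  show (starRingEnd ℂ) (LinearMap.trace ℂ V (V.ρ h)) = LinearMap.trace ℂ V (V.ρ h⁻¹)
  rw [← hf, ← hg, t1, t2, map_sum]
  refine Finset.sum_congr rfl fun μ _ => ?_
  rw [map_mul, hconj, map_natCast]

lemma hom_ext {X Y : FDRep ℂ H} {f g : X ⟶ Y} (h : f.hom.hom.hom = g.hom.hom.hom) : f = g :=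
  Action.Hom.ext (FGModuleCat.hom_ext h)

lemma hom_comm_apply {X Y : FDRep ℂ H} (f : X ⟶ Y) (h : H) (v : X) :
    f.hom (X.ρ h v) = Y.ρ h (f.hom v) :=
  LinearMap.congr_fun (congrArg (fun t => t.hom.hom) (f.comm h)) v

lemma injective_of_mono {Y X : FDRep ℂ H} (f : Y ⟶ X) [Mono f] :
    Function.Injective f.hom := by
  have hmap : ∀ h : H, ∀ v ∈ LinearMap.ker f.hom.hom.hom, Y.ρ h v ∈ LinearMap.ker f.hom.hom.hom := by
    intro h v hv
    rw [LinearMap.mem_ker] at hv ⊢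
    exact (hom_comm_apply f h v).trans (by show (X.ρ h) (f.hom.hom.hom v) = 0; rw [hv, map_zero])
  let ρK : Representation ℂ H (LinearMap.ker f.hom.hom.hom) :=
    { toFun := fun h => (Y.ρ h).restrict (hmap h)
      map_one' := by
        ext v
        simp [LinearMap.restrict_apply]
      map_mul' := fun a b => by
        refine LinearMap.ext fun v => Subtype.ext ?_
        show (Y.ρ (a * b)) v.1 = (Y.ρ a) ((Y.ρ b) v.1)
        rw [map_mul]
        rfl }
  let ι : FDRep.of ρK ⟶ Y := ⟨⟨ModuleCat.ofHom (LinearMap.ker f.hom.hom.hom).subtype⟩, fun h => rfl⟩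
  have h0 : ι ≫ f = 0 := by
    apply hom_ext
    ext v
    exact v.2
  have hι : ι = 0 := by
    rw [← cancel_mono f, h0, Limits.zero_comp]
  have hK : ∀ v ∈ LinearMap.ker f.hom.hom.hom, v = (0 : Y) := by
    intro v hv
    have := congrArg (fun t => t.hom.hom.hom) hι
    calc v = (LinearMap.ker f.hom.hom.hom).subtype ⟨v, hv⟩ := rfl
      _ = 0 := by rw [show (LinearMap.ker f.hom.hom.hom).subtype = ι.hom.hom.hom from rfl, this, Action.zero_hom]; rfl
  rw [← LinearMap.ker_eq_bot]
  exact (Submodule.eq_bot_iff _).mpr hK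

lemma isIso_of_bijective {X Y : FDRep ℂ H} (f : X ⟶ Y) (hb : Function.Bijective f.hom) :
    IsIso f := by
  let e := LinearEquiv.ofBijective f.hom.hom.hom hb
  have hcomm : ∀ h : H, ∀ v : Y, e.symm (Y.ρ h v) = X.ρ h (e.symm v) := by
    intro h v
    apply hb.injective
    show f.hom _ = f.hom _
    have h1 : ∀ w, f.hom (e.symm w) = w := fun w => e.apply_symm_apply w
    rw [h1, hom_comm_apply, h1]
  refine ⟨⟨⟨⟨ModuleCat.ofHom e.symm.toLinearMap⟩, fun h => ?_⟩, hom_ext ?_, hom_ext ?_⟩⟩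
  · ext v
    exact hcomm h v
  · ext v
    exact e.symm_apply_apply v
  · ext v
    exact e.apply_symm_apply v

lemma exists_retraction {Y X : FDRep ℂ H} (f : Y ⟶ X) (hinj : Function.Injective f.hom) :
    ∃ r : X ⟶ Y, f ≫ r = 𝟙 Y := by
  obtain ⟨π₀, hπ₀⟩ := f.hom.hom.hom.exists_leftInverse_of_injective (LinearMap.ker_eq_bot.mpr hinj)
  let r : X →ₗ[ℂ] Y :=
    (Fintype.card H : ℂ)⁻¹ • ∑ h : H, (Y.ρ h⁻¹ : Y →ₗ[ℂ] Y) ∘ₗ π₀ ∘ₗ (X.ρ h : X →ₗ[ℂ] X)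
  have hcard : (Fintype.card H : ℂ) ≠ 0 := Nat.cast_ne_zero.mpr Fintype.card_ne_zero
  have hπ₀' : ∀ v : Y, π₀ (f.hom v) = v := fun v => LinearMap.congr_fun hπ₀ v
  have hret : ∀ v : Y, r (f.hom v) = v := by
    intro v
    show (Fintype.card H : ℂ)⁻¹ • (∑ h : H, (Y.ρ h⁻¹ : Y →ₗ[ℂ] Y) ∘ₗ π₀ ∘ₗ (X.ρ h : X →ₗ[ℂ] X))
        (f.hom v) = v
    rw [LinearMap.sum_apply]
    have hterm : ∀ h : H, ((Y.ρ h⁻¹ : Y →ₗ[ℂ] Y) ∘ₗ π₀ ∘ₗ (X.ρ h : X →ₗ[ℂ] X)) (f.hom v) = v := by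
      intro h
      simp only [LinearMap.comp_apply]
      have e1 : (X.ρ h) (f.hom v) = f.hom ((Y.ρ h) v) := (hom_comm_apply f h v).symm
      calc (Y.ρ h⁻¹) (π₀ ((X.ρ h) (f.hom v)))
          = (Y.ρ h⁻¹) (π₀ (f.hom ((Y.ρ h) v))) := congrArg _ (congrArg π₀ e1)
        _ = (Y.ρ h⁻¹) ((Y.ρ h) v) := congrArg _ (hπ₀' _)
        _ = v := by
            rw [← Module.End.mul_apply, ← map_mul, inv_mul_cancel, map_one, Module.End.one_apply]
    rw [Finset.sum_congr rfl fun h _ => hterm h]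
    rw [Finset.sum_const, Finset.card_univ, ← Nat.cast_smul_eq_nsmul ℂ, smul_smul,
      inv_mul_cancel₀ hcard, one_smul]
  have hequi : ∀ (h : H) (v : X), r (X.ρ h v) = Y.ρ h (r v) := by
    intro g v
    show (Fintype.card H : ℂ)⁻¹ • (∑ h : H, (Y.ρ h⁻¹ : Y →ₗ[ℂ] Y) ∘ₗ π₀ ∘ₗ (X.ρ h : X →ₗ[ℂ] X))
        (X.ρ g v) = Y.ρ g ((Fintype.card H : ℂ)⁻¹ •
          (∑ h : H, (Y.ρ h⁻¹ : Y →ₗ[ℂ] Y) ∘ₗ π₀ ∘ₗ (X.ρ h : X →ₗ[ℂ] X)) v)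
    rw [map_smul]
    congr 1
    rw [LinearMap.sum_apply, LinearMap.sum_apply, map_sum]
    set A : H → Y := fun h => (Y.ρ h⁻¹) (π₀ ((X.ρ (h * g)) v)) with hA
    calc ∑ h : H, ((Y.ρ h⁻¹ : Y →ₗ[ℂ] Y) ∘ₗ π₀ ∘ₗ (X.ρ h : X →ₗ[ℂ] X)) ((X.ρ g) v)
        = ∑ h : H, A h := Finset.sum_congr rfl (fun h _ => by
            simp only [LinearMap.comp_apply, hA]
            congr 1
            congr 1
            rw [map_mul]
            rfl)
      _ = ∑ k : H, A (k * g⁻¹) := (Equiv.sum_comp (Equiv.mulRight g⁻¹) A).symm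
      _ = ∑ k : H, (Y.ρ g) (((Y.ρ k⁻¹ : Y →ₗ[ℂ] Y) ∘ₗ π₀ ∘ₗ (X.ρ k : X →ₗ[ℂ] X)) v) :=
          Finset.sum_congr rfl (fun k _ => by
            simp only [hA, LinearMap.comp_apply]
            have h1 : (k * g⁻¹)⁻¹ = g * k⁻¹ := by group
            have h2 : k * g⁻¹ * g = k := by group
            rw [h1, h2, map_mul]
            rfl)
  exact ⟨⟨⟨ModuleCat.ofHom r⟩, fun h => by ext v; exact hequi h v⟩, hom_ext (by ext v; exact hret v)⟩

lemma nontrivial_of_simple (X : FDRep ℂ H) [Simple X] : 0 < finrank ℂ X := by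
  by_contra hc
  push_neg at hc
  have h0 : finrank ℂ X = 0 := Nat.le_zero.mp hc
  have hsub : Subsingleton X := (Module.finrank_zero_iff (R := ℂ)).mp h0
  exact CategoryTheory.id_nonzero X
    (hom_ext (LinearMap.ext fun v => @Subsingleton.elim _ hsub _ _))

lemma simple_of_finrank_end_eq_one (X : FDRep ℂ H) (h0 : 0 < finrank ℂ X)
    (hX : finrank ℂ (X ⟶ X) = 1) : Simple X := by
  have hnt : Nontrivial X := Module.nontrivial_of_finrank_pos h0
  have hid : (𝟙 X) ≠ (0 : X ⟶ X) := by
    intro hc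
    obtain ⟨v, hv⟩ := exists_ne (0 : X)
    apply hv
    calc v = (𝟙 X : X ⟶ X).hom v := rfl
      _ = (0 : X ⟶ X).hom v := by rw [hc]
      _ = 0 := by rw [Action.zero_hom]; rfl
  constructor
  intro Y f hm
  constructor
  · intro hiso hf0
    have h3 : 𝟙 X = inv f ≫ f := (IsIso.inv_hom_id f).symm
    exact hid (h3.trans ((congrArg (fun t => inv f ≫ t) hf0).trans Limits.comp_zero))
  · intro hf0
    have hinj : Function.Injective f.hom := injective_of_mono f
    obtain ⟨r, hr⟩ := exists_retraction f hinj
    -- e := r ≫ f : X ⟶ X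
    obtain ⟨c, hc⟩ := (finrank_eq_one_iff_of_nonzero' (𝟙 X) hid).mp hX (r ≫ f)
    have hidem : (r ≫ f) ≫ (r ≫ f) = r ≫ f := by
      rw [Category.assoc, ← Category.assoc f r, hr, Category.id_comp]
    rw [← hc] at hidem
    have hcc : (c * c) • 𝟙 X = c • 𝟙 X := by
      rw [mul_smul]
      simpa using hidem
    have hc2 : c * c = c := by
      by_contra hne
      exact hne (smul_left_injective ℂ hid (by simpa using hcc))
    have hc01 : c = 0 ∨ c = 1 := by
      have hfac : c * (c - 1) = 0 := by linear_combination hc2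
      rcases mul_eq_zero.mp hfac with h | h
      · exact Or.inl h
      · exact Or.inr (sub_eq_zero.mp h)
    rcases hc01 with h | h
    · exfalso
      have hrf : r ≫ f = 0 := by rw [← hc, h, zero_smul]
      have : f = 0 := by
        calc f = 𝟙 Y ≫ f := by simp
        _ = (f ≫ r) ≫ f := by rw [hr]
        _ = f ≫ (r ≫ f) := by rw [Category.assoc]
        _ = f ≫ 0 := by rw [hrf]
        _ = 0 := Limits.comp_zero
      exact hf0 this
    · rw [h, one_smul] at hc
      exact ⟨⟨r, hr, hc.symm⟩⟩

lemma exists_simple_hom : ∀ (n : ℕ) (X : FDRep ℂ H), finrank ℂ X = n → 0 < n →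
    ∃ (T : FDRep ℂ H) (g : T ⟶ X), Simple T ∧ g.hom ≠ 0 := by
  intro n
  induction n using Nat.strong_induction_on with
  | _ n ih =>
    intro X hrk hpos
    have hnt : Nontrivial X := Module.nontrivial_of_finrank_pos (hrk ▸ hpos)
    by_cases hs : Simple X
    · refine ⟨X, 𝟙 X, hs, ?_⟩
      intro hc
      obtain ⟨v, hv⟩ := exists_ne (0 : X)
      apply hv
      calc v = (𝟙 X : X ⟶ X).hom v := rfl
        _ = (0 : X.V ⟶ X.V) v := by rw [hc]
        _ = 0 := rfl
    · have hnot : ¬ ∀ (Y : FDRep ℂ H) (f : Y ⟶ X) (_ : Mono f), IsIso f ↔ f ≠ 0 := by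
        intro hw
        exact hs ⟨fun {Y} f hm => hw Y f hm⟩
      push_neg at hnot
      obtain ⟨Y, f, hm, hiff⟩ := hnot
      haveI : Mono f := hm
      have hid : (𝟙 X) ≠ (0 : X ⟶ X) := by
        intro hc
        obtain ⟨v, hv⟩ := exists_ne (0 : X)
        apply hv
        calc v = (𝟙 X : X ⟶ X).hom v := rfl
          _ = (0 : X ⟶ X).hom v := by rw [hc]
          _ = 0 := by rw [Action.zero_hom]; rfl
      rcases hiff with ⟨hiso, hf0⟩ | ⟨hni, hf0⟩
      · exfalso
        have h3 : 𝟙 X = inv f ≫ f := (IsIso.inv_hom_id f).symm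
        exact hid (h3.trans ((congrArg (fun t => inv f ≫ t) hf0).trans Limits.comp_zero))
      · have hinj : Function.Injective f.hom := injective_of_mono f
        have hle : finrank ℂ Y ≤ finrank ℂ X := LinearMap.finrank_le_finrank_of_injective hinj
        have hne : finrank ℂ Y ≠ finrank ℂ X := by
          intro heq
          exact hni (isIso_of_bijective f
            ⟨hinj, (LinearMap.injective_iff_surjective_of_finrank_eq_finrank heq).mp hinj⟩)
        have hYpos : 0 < finrank ℂ Y := by
          rcases Nat.eq_zero_or_pos (finrank ℂ Y) with h | h
          · exfalso
            have hsub : Subsingleton Y := (Module.finrank_zero_iff (R := ℂ)).mp h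
            apply hf0
            apply hom_ext
            apply LinearMap.ext
            intro v
            rw [show v = (0 : Y) from @Subsingleton.elim _ hsub _ _]
            rw [map_zero]
            rfl
          · exact h
        obtain ⟨T, g, hT, hg⟩ := ih (finrank ℂ Y) (by omega) Y rfl hYpos
        refine ⟨T, g ≫ f, hT, ?_⟩
        intro hc
        apply hg
        apply FGModuleCat.hom_ext
        apply LinearMap.ext
        intro v
        have : f.hom (g.hom v) = 0 := by
          calc f.hom (g.hom v) = (g ≫ f).hom v := rfl
            _ = 0 := by rw [hc]; rfl
        exact (map_eq_zero_iff (ConcreteCategory.hom f.hom) hinj).mp this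

lemma tensorMap_id_cancel {A B W : Type} [AddCommGroup A] [Module ℂ A] [AddCommGroup B]
    [Module ℂ B] [AddCommGroup W] [Module ℂ W] [Module.Free ℂ W] {w : W} (hw : w ≠ 0)
    {f1 f2 : A →ₗ[ℂ] B}
    (h : TensorProduct.map f1 (LinearMap.id (M := W)) =
      TensorProduct.map f2 (LinearMap.id (M := W))) : f1 = f2 := by
  obtain ⟨φ0, hφ0⟩ : ∃ φ : Module.Dual ℂ W, φ w ≠ 0 := by
    by_contra hcon
    push_neg at hcon
    exact hw ((Module.forall_dual_apply_eq_zero_iff ℂ w).mp hcon)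
  set φ : Module.Dual ℂ W := (φ0 w)⁻¹ • φ0 with hφdef
  have hφ : φ w = 1 := by
    simp [hφdef, inv_mul_cancel₀ hφ0]
  ext a
  have h1 := congrArg (fun T : TensorProduct ℂ A W →ₗ[ℂ] TensorProduct ℂ B W =>
    (TensorProduct.rid ℂ B) ((TensorProduct.map (LinearMap.id (M := B)) φ) (T (a ⊗ₜ[ℂ] w)))) h
  simpa [TensorProduct.map_tmul, hφ] using h1

section Main

variable (G : Type) [Group G] [Fintype G] (N : Subgroup G) [hN : N.Normal]

/-- Restriction of a representation of `G` to `N`. -/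
abbrev resN (X : FDRep ℂ G) : FDRep ℂ ↥N :=
  (Action.res (FGModuleCat ℂ) N.subtype).obj X

set_option maxHeartbeats 2000000 in
lemma key (ψhat : FDRep ℂ G)
    (hψ1 : finrank ℂ (resN G N ψhat ⟶ resN G N ψhat) = 1)
    (w : ψhat) (hw : w ≠ 0) (θ₁ θ₂ : FDRep ℂ (G ⧸ N)) :
    finrank ℂ (gallagherMap G N ψhat θ₁ ⟶ gallagherMap G N ψhat θ₂)
      = finrank ℂ (θ₁ ⟶ θ₂) := by
  classical
  set X₁ := gallagherMap G N ψhat θ₁ with hX₁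
  set X₂ := gallagherMap G N ψhat θ₂ with hX₂
  set d₁ := finrank ℂ θ₁ with hd₁
  set d₂ := finrank ℂ θ₂ with hd₂
  have hcardN : (Fintype.card ↥N : ℂ) ≠ 0 := Nat.cast_ne_zero.mpr Fintype.card_ne_zero
  -- characters of X_i on N
  have hcharX : ∀ (θ : FDRep ℂ (G ⧸ N)) (n : ↥N),
      FDRep.character (gallagherMap G N ψhat θ) ↑n
        = (finrank ℂ θ : ℂ) * FDRep.character ψhat ↑n := by
    intro θ n
    have h1 : FDRep.character (gallagherMap G N ψhat θ) ↑n
        = θ.character (QuotientGroup.mk ↑n) * ψhat.character ↑n :=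
      congrFun (FDRep.char_tensor
        ((Action.res (FGModuleCat ℂ) (QuotientGroup.mk' N)).obj θ) ψhat) ↑n
    rw [h1, show (QuotientGroup.mk ↑n : G ⧸ N) = 1 from (QuotientGroup.eq_one_iff _).mpr n.2,
      FDRep.char_one]
  -- dimension count for N-homs
  have hcount : finrank ℂ (resN G N X₁ ⟶ resN G N X₂) = d₁ * d₂ := by
    have h1 := sum_char_eq (resN G N X₂) (resN G N X₁)
    have h2 := sum_char_eq (resN G N ψhat) (resN G N ψhat)
    rw [hψ1] at h2
    have hterm : ∀ n : ↥N,
        FDRep.character (resN G N X₂) n * FDRep.character (resN G N X₁) n⁻¹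
          = ((d₁ : ℂ) * d₂) *
            (FDRep.character (resN G N ψhat) n * FDRep.character (resN G N ψhat) n⁻¹) := by
      intro n
      have e2 : FDRep.character (resN G N X₂) n = (d₂ : ℂ) * FDRep.character ψhat ↑n :=
        hcharX θ₂ n
      have e1 : FDRep.character (resN G N X₁) n⁻¹ = (d₁ : ℂ) * FDRep.character ψhat ↑n⁻¹ :=
        hcharX θ₁ n⁻¹
      rw [e1, e2]
      show (d₂ : ℂ) * FDRep.character ψhat ↑n * ((d₁ : ℂ) * FDRep.character ψhat (↑n)⁻¹)
        = ((d₁ : ℂ) * d₂) * (FDRep.character ψhat ↑n * FDRep.character ψhat (↑n)⁻¹)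
      ring
    rw [Finset.sum_congr rfl fun n _ => hterm n, ← Finset.mul_sum, h2] at h1
    have : (Fintype.card ↥N : ℂ) * (d₁ * d₂ : ℕ)
        = (Fintype.card ↥N : ℂ) * finrank ℂ (resN G N X₁ ⟶ resN G N X₂) := by
      rw [← h1]
      push_cast
      ring
    exact (Nat.cast_injective (mul_left_cancel₀ hcardN this)).symm
  -- the map  f ↦ f ⊗ 1  on plain linear maps, valued in N-equivariant homs
  let bmap : (↑θ₁ →ₗ[ℂ] ↑θ₂) →ₗ[ℂ] (resN G N X₁ ⟶ resN G N X₂) :=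
    { toFun := fun f =>
        { hom := ⟨ModuleCat.ofHom (TensorProduct.map f LinearMap.id)⟩
          comm := fun n => by
            apply FGModuleCat.hom_ext
            have hmk : (QuotientGroup.mk (N.subtype n) : G ⧸ N) = 1 :=
              (QuotientGroup.eq_one_iff _).mpr (show (N.subtype n) ∈ N from n.2)
            show TensorProduct.map f LinearMap.id ∘ₗ
                TensorProduct.map (θ₁.ρ (QuotientGroup.mk (N.subtype n))) (ψhat.ρ (N.subtype n))
              = TensorProduct.map (θ₂.ρ (QuotientGroup.mk (N.subtype n)))
                  (ψhat.ρ (N.subtype n)) ∘ₗ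
                TensorProduct.map f LinearMap.id
            rw [hmk, map_one, map_one, ← TensorProduct.map_comp, ← TensorProduct.map_comp]
            simp [Module.End.one_eq_id] }
      map_add' := fun f g => by
        apply hom_ext
        show TensorProduct.map (f + g) LinearMap.id = _
        rw [Action.add_hom]
        show _ = TensorProduct.map f LinearMap.id + TensorProduct.map g LinearMap.id
        rw [TensorProduct.map_add_left]
      map_smul' := fun c f => by
        apply hom_ext
        show TensorProduct.map (c • f) LinearMap.id = _
        rw [RingHom.id_apply, Action.smul_hom]
        show _ = c • TensorProduct.map f LinearMap.id
        rw [TensorProduct.map_smul_left] }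
  have hbinj : Function.Injective bmap := by
    intro f1 f2 hf
    have : TensorProduct.map f1 LinearMap.id = TensorProduct.map f2 LinearMap.id :=
      congrArg (fun t => t.hom.hom.hom) hf
    exact tensorMap_id_cancel hw this
  have hbsurj : Function.Surjective bmap := by
    have hdim : finrank ℂ (↑θ₁ →ₗ[ℂ] ↑θ₂) = finrank ℂ (resN G N X₁ ⟶ resN G N X₂) := by
      rw [hcount, Module.finrank_linearMap]
    exact (LinearMap.injective_iff_surjective_of_finrank_eq_finrank hdim).mp hbinj
  -- now the G-level bijection
  let Φ : (θ₁ ⟶ θ₂) →ₗ[ℂ] (X₁ ⟶ X₂) :=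
    { toFun := fun f =>
        { hom := ⟨ModuleCat.ofHom (TensorProduct.map f.hom.hom.hom LinearMap.id)⟩
          comm := fun g => by
            apply FGModuleCat.hom_ext
            show TensorProduct.map f.hom.hom.hom LinearMap.id ∘ₗ
                TensorProduct.map (θ₁.ρ (QuotientGroup.mk g)) (ψhat.ρ g)
              = TensorProduct.map (θ₂.ρ (QuotientGroup.mk g)) (ψhat.ρ g) ∘ₗ
                TensorProduct.map f.hom.hom.hom LinearMap.id
            rw [← TensorProduct.map_comp, ← TensorProduct.map_comp]
            have hcf : f.hom.hom.hom ∘ₗ θ₁.ρ (QuotientGroup.mk g)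
                = θ₂.ρ (QuotientGroup.mk g) ∘ₗ f.hom.hom.hom :=
              congrArg (fun t => t.hom.hom) (f.comm (QuotientGroup.mk g))
            rw [hcf]
            simp }
      map_add' := fun f g => by
        apply hom_ext
        show TensorProduct.map (f + g).hom.hom.hom LinearMap.id = _
        rw [Action.add_hom]
        show TensorProduct.map (f.hom.hom.hom + g.hom.hom.hom) LinearMap.id
          = TensorProduct.map f.hom.hom.hom LinearMap.id + TensorProduct.map g.hom.hom.hom LinearMap.id
        rw [TensorProduct.map_add_left]
      map_smul' := fun c f => by
        apply hom_ext
        show TensorProduct.map (c • f).hom.hom.hom LinearMap.id = _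
        rw [RingHom.id_apply, Action.smul_hom]
        show TensorProduct.map (c • f.hom.hom.hom) LinearMap.id
          = c • TensorProduct.map f.hom.hom.hom LinearMap.id
        rw [TensorProduct.map_smul_left] }
  have hΦinj : Function.Injective Φ := by
    intro f1 f2 hf
    apply hom_ext
    exact tensorMap_id_cancel hw (congrArg (fun t => t.hom.hom.hom) hf)
  have hΦsurj : Function.Surjective Φ := by
    intro F
    -- restrict F to N and use surjectivity of bmap
    obtain ⟨f₀, hf₀⟩ := hbsurj ⟨F.hom, fun n => F.comm (N.subtype n)⟩
    have hf₀' : TensorProduct.map f₀ LinearMap.id = F.hom.hom.hom :=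
      congrArg (fun t => t.hom.hom.hom) hf₀
    -- equivariance of f₀
    have hequi : ∀ q : G ⧸ N, f₀ ∘ₗ θ₁.ρ q = θ₂.ρ q ∘ₗ f₀ := by
      intro q
      obtain ⟨g, rfl⟩ := QuotientGroup.mk_surjective q
      have hFc : F.hom.hom.hom ∘ₗ TensorProduct.map (θ₁.ρ (QuotientGroup.mk g)) (ψhat.ρ g)
          = TensorProduct.map (θ₂.ρ (QuotientGroup.mk g)) (ψhat.ρ g) ∘ₗ F.hom.hom.hom :=
        congrArg (fun t => t.hom.hom) (F.comm g)
      rw [← hf₀'] at hFc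
      replace hFc : TensorProduct.map f₀ LinearMap.id ∘ₗ
          TensorProduct.map (θ₁.ρ (QuotientGroup.mk g)) (ψhat.ρ g)
          = TensorProduct.map (θ₂.ρ (QuotientGroup.mk g)) (ψhat.ρ g) ∘ₗ
          TensorProduct.map f₀ LinearMap.id := hFc
      rw [← TensorProduct.map_comp, ← TensorProduct.map_comp] at hFc
      -- compose with map id (ψhat.ρ g⁻¹) on the right
      have hcc := congrArg (fun T => T ∘ₗ TensorProduct.map
        (LinearMap.id (M := ↑θ₁)) (ψhat.ρ g⁻¹)) hFc
      rw [← TensorProduct.map_comp, ← TensorProduct.map_comp] at hcc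
      have hinv : ψhat.ρ g ∘ₗ ψhat.ρ g⁻¹ = LinearMap.id := by
        rw [show ψhat.ρ g ∘ₗ ψhat.ρ g⁻¹ = ψhat.ρ g * ψhat.ρ g⁻¹ from rfl, ← map_mul,
          mul_inv_cancel, map_one]
        rfl
      simp only [LinearMap.comp_id, LinearMap.id_comp] at hcc
      rw [hinv] at hcc
      exact tensorMap_id_cancel hw hcc
    exact ⟨⟨⟨ModuleCat.ofHom f₀⟩, fun q => FGModuleCat.hom_ext (hequi q)⟩, hom_ext hf₀'⟩
  exact (LinearEquiv.ofBijective Φ ⟨hΦinj, hΦsurj⟩).finrank_eq.symm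

lemma containsChar_iff {H : Type} [Fintype H] (f χ : H → ℂ) :
    containsChar H f χ ↔ ∑ h : H, f h * (starRingEnd ℂ) (χ h) ≠ 0 := by
  have he : (Fintype.ofFinite H) = ‹Fintype H› := Subsingleton.elim _ _
  unfold containsChar
  rw [he]

end Main

end Gallagher

open Gallagher Module in
set_option maxHeartbeats 2000000 in
/-- **Gallagher's theorem.** Let `N ⊴ G` be finite groups and `ψ ∈ Irr(N)` invariant in
`G`, extending to `ψ̂ ∈ Irr(G)`. Then `θ̄ ↦ θ ⊗ ψ̂` (inflation followed by tensoring with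
`ψ̂`) is a bijection, on isomorphism classes, from `Irr(G/N)` onto the set of irreducible
representations of `G` whose restriction to `N` contains `ψ`. -/
theorem gallagher (G : Type) [Group G] [Fintype G] (N : Subgroup G) [hN : N.Normal]
    (ψ : FDRep ℂ ↥N) (hψ : Simple ψ)
    (hinv : ∀ g : G, ∀ n : ↥N,
      ψ.character ⟨g⁻¹ * ↑n * g, by simpa using hN.conj_mem ↑n n.2 g⁻¹⟩ = ψ.character n)
    (ψhat : FDRep ℂ G)
    (hext : Nonempty ((Action.res (FGModuleCat ℂ) N.subtype).obj ψhat ≅ ψ)) :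
    -- the map lands in `Irr(G ∣ ψ)`
    (∀ θ : FDRep ℂ (G ⧸ N), Simple θ →
      Simple (gallagherMap G N ψhat θ) ∧
      containsChar ↥N (fun n => (gallagherMap G N ψhat θ).character ↑n) ψ.character) ∧
    -- injectivity on isomorphism classes
    (∀ θ₁ θ₂ : FDRep ℂ (G ⧸ N), Simple θ₁ → Simple θ₂ →
      Nonempty (gallagherMap G N ψhat θ₁ ≅ gallagherMap G N ψhat θ₂) →
      Nonempty (θ₁ ≅ θ₂)) ∧
    -- surjectivity onto `Irr(G ∣ ψ)`
    (∀ ρ : FDRep ℂ G, Simple ρ →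
      containsChar ↥N (fun n => ρ.character ↑n) ψ.character →
      ∃ θ : FDRep ℂ (G ⧸ N), Simple θ ∧ Nonempty (ρ ≅ gallagherMap G N ψhat θ)) := by
  classical
  obtain ⟨isoψ⟩ := hext
  haveI := hψ
  haveI hressimple : Simple (resN G N ψhat) := Simple.of_iso (Y := ψ) isoψ
  have hψ1 : finrank ℂ (resN G N ψhat ⟶ resN G N ψhat) = 1 := by
    rw [FDRep.finrank_hom_simple_simple]
    exact if_pos ⟨Iso.refl _⟩
  have hdψ : 0 < finrank ℂ ψhat := nontrivial_of_simple (resN G N ψhat)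
  obtain ⟨w, hw⟩ : ∃ w : ψhat, w ≠ 0 := by
    have : Nontrivial ψhat := Module.nontrivial_of_finrank_pos hdψ
    exact exists_ne 0
  have hchar_eq : ∀ n : ↥N, ψhat.character ↑n = ψ.character n := fun n =>
    congrFun (FDRep.char_iso isoψ) n
  have hcharX : ∀ (θ : FDRep ℂ (G ⧸ N)) (n : ↥N),
      FDRep.character (gallagherMap G N ψhat θ) ↑n
        = (finrank ℂ θ : ℂ) * ψ.character n := by
    intro θ n
    have h1 : FDRep.character (gallagherMap G N ψhat θ) ↑n
        = θ.character (QuotientGroup.mk ↑n) * ψhat.character ↑n :=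
      congrFun (FDRep.char_tensor
        ((Action.res (FGModuleCat ℂ) (QuotientGroup.mk' N)).obj θ) ψhat) ↑n
    rw [h1, show (QuotientGroup.mk ↑n : G ⧸ N) = 1 from (QuotientGroup.eq_one_iff _).mpr n.2,
      FDRep.char_one, hchar_eq]
  -- Part 1
  have part1 : ∀ θ : FDRep ℂ (G ⧸ N), Simple θ →
      Simple (gallagherMap G N ψhat θ) ∧
      containsChar ↥N (fun n => (gallagherMap G N ψhat θ).character ↑n) ψ.character := by
    intro θ hθ
    haveI := hθ
    have hdθ : 0 < finrank ℂ θ := nontrivial_of_simple θ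
    constructor
    · apply simple_of_finrank_end_eq_one
      · have hXrank : finrank ℂ (gallagherMap G N ψhat θ)
            = finrank ℂ θ * finrank ℂ ψhat := Module.finrank_tensorProduct
        rw [hXrank]
        exact Nat.mul_pos hdθ hdψ
      · rw [key G N ψhat hψ1 w hw θ θ, FDRep.finrank_hom_simple_simple]
        exact if_pos ⟨Iso.refl _⟩
    · rw [containsChar_iff]
      have hterm : ∀ n : ↥N,
          (gallagherMap G N ψhat θ).character ↑n * (starRingEnd ℂ) (ψ.character n)
            = (finrank ℂ θ : ℂ) * ((Complex.normSq (ψ.character n) : ℝ) : ℂ) := by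
        intro n
        rw [hcharX θ n, mul_assoc, Complex.mul_conj]
      rw [Finset.sum_congr rfl fun n _ => hterm n, ← Finset.mul_sum]
      apply mul_ne_zero (Nat.cast_ne_zero.mpr hdθ.ne')
      rw [← Complex.ofReal_sum]
      rw [Ne, Complex.ofReal_eq_zero]
      have hpos : 0 < ∑ n : ↥N, Complex.normSq (ψ.character n) := by
        apply Finset.sum_pos'
        · intro n _
          exact Complex.normSq_nonneg _
        · refine ⟨1, Finset.mem_univ _, ?_⟩
          rw [FDRep.char_one]
          have hdψ' : 0 < finrank ℂ ψ := nontrivial_of_simple ψ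
          have : ((finrank ℂ ψ : ℂ)) = (((finrank ℂ ψ : ℝ)) : ℂ) := by push_cast; rfl
          rw [this, Complex.normSq_ofReal]
          positivity
      exact hpos.ne'
  refine ⟨part1, ?_, ?_⟩
  -- Part 2
  · intro θ₁ θ₂ h₁ h₂ hiso
    obtain ⟨i⟩ := hiso
    haveI := h₁
    haveI := h₂
    have hF : i.hom ≠ 0 := by
      intro hc
      haveI := (part1 θ₁ h₁).1
      have h3 : 𝟙 (gallagherMap G N ψhat θ₁) = i.hom ≫ i.inv := (Iso.hom_inv_id i).symm
      rw [hc, Limits.zero_comp] at h3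
      exact CategoryTheory.id_nonzero (gallagherMap G N ψhat θ₁) h3
    have hnontriv : Nontrivial (gallagherMap G N ψhat θ₁ ⟶ gallagherMap G N ψhat θ₂) :=
      nontrivial_of_ne i.hom 0 hF
    have hpos : 0 < finrank ℂ (θ₁ ⟶ θ₂) := by
      rw [← key G N ψhat hψ1 w hw θ₁ θ₂]
      exact Module.finrank_pos_iff.mpr hnontriv
    by_contra hne
    rw [FDRep.finrank_hom_simple_simple, if_neg hne] at hpos
    exact lt_irrefl 0 hpos
  -- Part 3
  · intro ρ hρ hcontains
    haveI := hρ
    rw [containsChar_iff] at hcontains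
    set Wsp := (↑ψhat →ₗ[ℂ] ↑ρ) with hWsp
    set C : Representation ℂ G Wsp := Representation.linHom ψhat.ρ ρ.ρ with hC
    set S : Submodule ℂ Wsp :=
      (Representation.linHom (resN G N ψhat).ρ (resN G N ρ).ρ).invariants with hS
    have hSmem : ∀ T : Wsp, T ∈ S ↔ ∀ n : ↥N, C ↑n T = T := by
      intro T
      rw [hS]
      exact Iff.rfl
    have hCmul : ∀ (a b : G) (T : Wsp), C (a * b) T = C a (C b T) := by
      intro a b T
      rw [map_mul]
      rfl
    have hmaps : ∀ g : G, ∀ T ∈ S, C g T ∈ S := by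
      intro g T hT
      rw [hSmem] at hT ⊢
      intro n
      have hmem : g⁻¹ * ↑n * g ∈ N := by simpa using hN.conj_mem ↑n n.2 g⁻¹
      have hmul : (↑n : G) * g = g * (g⁻¹ * ↑n * g) := by group
      calc C ↑n (C g T) = C (↑n * g) T := (hCmul ↑n g T).symm
        _ = C (g * (g⁻¹ * ↑n * g)) T := by rw [← hmul]
        _ = C g (C (g⁻¹ * ↑n * g) T) := hCmul _ _ T
        _ = C g T := by rw [hT ⟨g⁻¹ * ↑n * g, hmem⟩]
    let φ : G →* Module.End ℂ S :=
      { toFun := fun g => (C g).restrict (hmaps g)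
        map_one' := by
          refine LinearMap.ext fun T => Subtype.ext ?_
          show (C 1) T.1 = T.1
          rw [map_one]
          rfl
        map_mul' := fun a b => by
          refine LinearMap.ext fun T => Subtype.ext ?_
          show (C (a * b)) T.1 = (C a) ((C b) T.1)
          exact hCmul a b T.1 }
    have hker : N ≤ φ.ker := by
      intro n hn
      rw [MonoidHom.mem_ker]
      refine LinearMap.ext fun T => Subtype.ext ?_
      show (C n) T.1 = T.1
      exact (hSmem T.1).mp T.2 ⟨n, hn⟩
    let ρM : Representation ℂ (G ⧸ N) S := QuotientGroup.lift N φ hker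
    let M : FDRep ℂ (G ⧸ N) := FDRep.of ρM
    have hSiso : S ≃ₗ[ℂ] (resN G N ψhat ⟶ resN G N ρ) :=
      Representation.linHom.invariantsEquivFDRepHom
        (resN G N ψhat) (resN G N ρ)
    have hSrank : finrank ℂ S ≠ 0 := by
      rw [hSiso.finrank_eq]
      intro hzero
      apply hcontains
      have h1 := sum_char_eq (resN G N ρ) (resN G N ψhat)
      rw [hzero] at h1
      push_cast at h1
      rw [mul_zero] at h1
      rw [← h1]
      refine Finset.sum_congr rfl fun n _ => ?_
      congr 1
      rw [conj_char ψ n, ← hchar_eq n⁻¹]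
      rfl
    have hMrank : 0 < finrank ℂ M := Nat.pos_of_ne_zero hSrank
    obtain ⟨θ, gm, hθ, hgm⟩ := exists_simple_hom (finrank ℂ M) M rfl hMrank
    haveI := hθ
    -- build the morphism F : gallagherMap θ ⟶ ρ
    let L : ↑θ →ₗ[ℂ] Wsp := S.subtype ∘ₗ gm.hom.hom.hom
    have hLcomm : ∀ (g : G) (x : ↑θ), L (θ.ρ (QuotientGroup.mk g) x) = C g (L x) := by
      intro g x
      have h1 : gm.hom (θ.ρ (QuotientGroup.mk g) x) = M.ρ (QuotientGroup.mk g) (gm.hom x) :=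
        hom_comm_apply gm (QuotientGroup.mk g) x
      have h2 : M.ρ (QuotientGroup.mk g) (gm.hom x) = φ g (gm.hom x) := by
        show ρM (QuotientGroup.mk g) (gm.hom x) = φ g (gm.hom x)
        have : ρM (QuotientGroup.mk g) = φ g := QuotientGroup.lift_mk' N hker g
        rw [this]
      show S.subtype (gm.hom (θ.ρ (QuotientGroup.mk g) x)) = C g (S.subtype (gm.hom x))
      rw [h1, h2]
      rfl
    let Fhom : ↑(gallagherMap G N ψhat θ) →ₗ[ℂ] ↑ρ := TensorProduct.lift L
    have hFcomm : ∀ g : G,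
        Fhom ∘ₗ TensorProduct.map (θ.ρ (QuotientGroup.mk g)) (ψhat.ρ g)
          = ρ.ρ g ∘ₗ Fhom := by
      intro g
      apply TensorProduct.ext'
      intro x v
      show Fhom (θ.ρ (QuotientGroup.mk g) x ⊗ₜ[ℂ] ψhat.ρ g v) = ρ.ρ g (Fhom (x ⊗ₜ[ℂ] v))
      have h1 : Fhom (θ.ρ (QuotientGroup.mk g) x ⊗ₜ[ℂ] ψhat.ρ g v)
          = (L (θ.ρ (QuotientGroup.mk g) x)) (ψhat.ρ g v) := rfl
      have h2 : Fhom (x ⊗ₜ[ℂ] v) = L x v := rfl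
      rw [h1, h2, hLcomm g x]
      show ρ.ρ g ((L x) (ψhat.ρ g⁻¹ (ψhat.ρ g v))) = ρ.ρ g ((L x) v)
      congr 1
      rw [← Module.End.mul_apply, ← map_mul, inv_mul_cancel, map_one, Module.End.one_apply]
    let F : gallagherMap G N ψhat θ ⟶ ρ :=
      ⟨⟨ModuleCat.ofHom Fhom⟩, fun g => FGModuleCat.hom_ext (hFcomm g)⟩
    have hFne : F ≠ 0 := by
      intro hc
      obtain ⟨x, hx⟩ : ∃ x : ↑θ, gm.hom x ≠ 0 := by
        by_contra hcc
        push_neg at hcc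
        exact hgm (FGModuleCat.hom_ext (LinearMap.ext fun x => hcc x))
      have hT : S.subtype (gm.hom x) ≠ 0 := fun hz => hx (Subtype.ext hz)
      obtain ⟨v, hv⟩ : ∃ v : ↑ψhat, (S.subtype (gm.hom x)) v ≠ 0 := by
        by_contra hcc
        push_neg at hcc
        exact hT (LinearMap.ext fun v => hcc v)
      apply hv
      calc (S.subtype (gm.hom x)) v = Fhom (x ⊗ₜ[ℂ] v) := rfl
        _ = (0 : gallagherMap G N ψhat θ ⟶ ρ).hom (x ⊗ₜ[ℂ] v) := by rw [← hc]; rfl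
        _ = 0 := by rw [Action.zero_hom]; rfl
    haveI hXθsimple : Simple (gallagherMap G N ψhat θ) := (part1 θ hθ).1
    have hpos : 0 < finrank ℂ (gallagherMap G N ψhat θ ⟶ ρ) :=
      Module.finrank_pos_iff.mpr (nontrivial_of_ne F 0 hFne)
    rw [FDRep.finrank_hom_simple_simple] at hpos
    by_cases hiso : Nonempty (gallagherMap G N ψhat θ ≅ ρ)
    · obtain ⟨i⟩ := hiso
      exact ⟨θ, hθ, ⟨i.symm⟩⟩
    · rw [if_neg hiso] at hpos
      exact absurd hpos (lt_irrefl 0)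
end
end

section
/- Let G be a finite group, N ⊴ G with V = G/N an elementary abelian p-group, and χ a one-dimensional complex character of N invariant in G. Suppose the form h_χ: V × V → C^× given by h_χ(g_1 N, g_2 N) = χ([g_1, g_2]) is well-defined and non-degenerate. Then there is a unique irreducible representation ρ_χ of G whose restriction to N contains χ, and dim ρ_χ = [G:N]^{1/2}. -/
open CategoryTheory
open scoped Classical

noncomputable section
variable {k : Type} [Field k] {G : Type} [Group G]

/-- restriction of a representation to an invariant submodule -/
def Representation.subRep {V : Type} [AddCommGroup V] [Module k V]
    (ρ : Representation k G V) (U : Submodule k V)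
    (hU : ∀ g : G, ∀ v ∈ U, ρ g v ∈ U) : Representation k G U where
  toFun g := (ρ g).restrict (hU g)
  map_one' := by ext v; simp [LinearMap.restrict_apply]
  map_mul' g h := by ext v; simp [LinearMap.restrict_apply]

theorem simple_of_irreducible {V : Type} [AddCommGroup V] [Module k V] [FiniteDimensional k V]
    (ρ : Representation k G V) (hnz : Nontrivial V)
    (hirr : ∀ p : Submodule k V, (∀ g : G, ∀ v ∈ p, ρ g v ∈ p) → p = ⊥ ∨ p = ⊤) :
    Simple (FDRep.of ρ) := by
  constructor
  intro Y f hf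
  constructor
  · intro hiso h0
    obtain ⟨x, y, hxy⟩ := hnz
    have h1 : (𝟙 (FDRep.of ρ) : FDRep.of ρ ⟶ FDRep.of ρ) = 0 := by
      have := (IsIso.inv_hom_id f).symm.trans ((congrArg (fun g => inv f ≫ g) h0).trans (Limits.comp_zero))
      exact this
    have h2 : x = y := by
      have hx := congrArg (fun (φ : FDRep.of ρ ⟶ FDRep.of ρ) => φ.hom x) h1
      have hy := congrArg (fun (φ : FDRep.of ρ ⟶ FDRep.of ρ) => φ.hom y) h1
      simpa using hx.trans hy.symm
    exact hxy h2
  · intro hf0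
    have hc : ∀ (g : G) (y : Y), f.hom (Y.ρ g y) = ρ g (f.hom y) := fun g y =>
      congrArg (fun φ => φ.hom.hom y) (f.comm g)
    -- injectivity via the kernel subrepresentation
    have hkinv : ∀ g : G, ∀ y ∈ LinearMap.ker (f.hom.hom.hom : Y →ₗ[k] V), Y.ρ g y ∈ LinearMap.ker (f.hom.hom.hom : Y →ₗ[k] V) := by
      intro g y hy
      simp only [LinearMap.mem_ker] at hy ⊢
      exact (hc g y).trans ((congrArg (ρ g) hy).trans (map_zero _))
    let K : FDRep k G := FDRep.of (Representation.subRep Y.ρ _ hkinv)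
    let ι : K ⟶ Y := { hom := FGModuleCat.ofHom (LinearMap.ker (f.hom.hom.hom : Y →ₗ[k] V)).subtype, comm := fun g => rfl }
    have hι : ι ≫ f = 0 := by
      apply Action.Hom.ext
      apply FGModuleCat.hom_ext
      apply LinearMap.ext
      intro x
      exact x.2
    have hι0 : ι = 0 := by
      have h2 : ι ≫ f = (0 : K ⟶ Y) ≫ f := by rw [hι, Limits.zero_comp]
      exact (cancel_mono f).mp h2
    have hinj : Function.Injective (f.hom.hom.hom : Y →ₗ[k] V) := by
      rw [← LinearMap.ker_eq_bot]
      rw [Submodule.eq_bot_iff]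
      intro x hx
      have h := congrArg (fun (ψ : K ⟶ Y) => ψ.hom.hom.hom) hι0
      have h2 := LinearMap.congr_fun h (⟨x, hx⟩ : LinearMap.ker (f.hom.hom.hom : Y →ₗ[k] V))
      simp [ι] at h2
      exact h2
    -- surjectivity via irreducibility
    have hrinv : ∀ g : G, ∀ v ∈ LinearMap.range (f.hom.hom.hom : Y →ₗ[k] V), ρ g v ∈ LinearMap.range (f.hom.hom.hom : Y →ₗ[k] V) := by
      rintro g v ⟨y, rfl⟩
      exact ⟨Y.ρ g y, hc g y⟩
    have hsurj : Function.Surjective (f.hom.hom.hom : Y →ₗ[k] V) := by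
      rcases hirr _ hrinv with h | h
      · exfalso; apply hf0
        apply Action.Hom.ext
        apply FGModuleCat.hom_ext
        apply LinearMap.ext
        intro y
        have : (f.hom.hom.hom : Y →ₗ[k] V) y ∈ (⊥ : Submodule k V) := h ▸ LinearMap.mem_range_self _ y
        simpa using this
      · rw [← LinearMap.range_eq_top]; exact h
    let e : Y ≃ₗ[k] V := LinearEquiv.ofBijective (f.hom.hom.hom : Y →ₗ[k] V) ⟨hinj, hsurj⟩
    have : IsIso f.hom := by
      refine ⟨⟨FGModuleCat.ofHom e.symm.toLinearMap, ?_, ?_⟩⟩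
      · apply FGModuleCat.hom_ext; apply LinearMap.ext; intro y; exact e.symm_apply_apply y
      · apply FGModuleCat.hom_ext; apply LinearMap.ext; intro v; exact e.apply_symm_apply v
    exact Action.isIso_of_hom_isIso f

/-- The right regular representation on functions `G → k`. -/
def rreg [Fintype G] : Representation k G (G → k) where
  toFun g :=
    { toFun := fun f x => f (x * g)
      map_add' := fun f₁ f₂ => rfl
      map_smul' := fun c f => rfl }
  map_one' := LinearMap.ext fun f => funext fun x => by simp
  map_mul' g h := LinearMap.ext fun f => funext fun x => by
    show f (x * (g * h)) = f (x * g * h)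
    rw [mul_assoc]

theorem rreg_apply [Fintype G] (g : G) (f : G → k) (x : G) : rreg g f x = f (x * g) := rfl

theorem sum_fintype_indep {α : Type} (F : α → ℂ) (i1 i2 : Fintype α) :
    @Finset.sum α ℂ _ (@Finset.univ α i1) F = @Finset.sum α ℂ _ (@Finset.univ α i2) F := by
  congr!

end


theorem containsChar_iff {H : Type} [Finite H] (f χ' : H → ℂ) (i : Fintype H) :
    containsChar H f χ' ↔
    @Finset.sum H ℂ _ (@Finset.univ H i) (fun h => f h * (starRingEnd ℂ) (χ' h)) ≠ 0 := by
  unfold containsChar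
  rw [show (@Finset.univ H (Fintype.ofFinite H)) = (@Finset.univ H i) by congr!]

/-- **Heisenberg lift (Bushnell–Fröhlich).** Let `G` be a finite group, `N ⊴ G` with
`V = G/N` an elementary abelian `p`-group, and `χ` a one-dimensional character of `N`
invariant in `G`, such that the form `h_χ(g₁N, g₂N) = χ([g₁,g₂])` is well defined and
non-degenerate. Then there is a unique (up to isomorphism) irreducible representation
`ρ_χ` of `G` whose restriction to `N` contains `χ`, and `(dim ρ_χ)² = [G:N]`. -/
theorem heisenberg_lift (G : Type) [Group G] [Fintype G] (p : ℕ) (hp : p.Prime)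
    (N : Subgroup G) [hN : N.Normal]
    -- `G/N` is an elementary abelian `p`-group
    (helem : ∀ x : G ⧸ N, x ^ p = 1) (hab : ∀ x y : G ⧸ N, x * y = y * x)
    (χ : ↥N →* ℂˣ)
    -- `χ` is invariant in `G`
    (hinv : ∀ (g : G) (n : ↥N),
      χ ⟨g⁻¹ * ↑n * g, by simpa using hN.conj_mem ↑n n.2 g⁻¹⟩ = χ n)
    -- commutators `[g₁,g₂] = g₁⁻¹g₂⁻¹g₁g₂` lie in `N` (so `h_χ` makes sense)
    (hcomm : ∀ g₁ g₂ : G, g₁⁻¹ * g₂⁻¹ * g₁ * g₂ ∈ N)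
    -- `h_χ` is well defined on `G/N × G/N`
    (hwd : ∀ g₁ g₂ g₁' g₂' : G, (g₁ : G ⧸ N) = (g₁' : G ⧸ N) →
      (g₂ : G ⧸ N) = (g₂' : G ⧸ N) →
      χ ⟨g₁⁻¹ * g₂⁻¹ * g₁ * g₂, hcomm g₁ g₂⟩
        = χ ⟨g₁'⁻¹ * g₂'⁻¹ * g₁' * g₂', hcomm g₁' g₂'⟩)
    -- `h_χ` is non-degenerate
    (hnd : ∀ g₁ : G, (∀ g₂ : G, χ ⟨g₁⁻¹ * g₂⁻¹ * g₁ * g₂, hcomm g₁ g₂⟩ = 1) → g₁ ∈ N) :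
    ∃ ρ : FDRep ℂ G, Simple ρ ∧
      containsChar ↥N (fun n => ρ.character ↑n) (fun n => (χ n : ℂ)) ∧
      Module.finrank ℂ ρ ^ 2 = N.index ∧
      ∀ ρ' : FDRep ℂ G, Simple ρ' →
        containsChar ↥N (fun n => ρ'.character ↑n) (fun n => (χ n : ℂ)) →
        Nonempty (ρ' ≅ ρ) := by
  classical
  -- the subspace `W` of the right regular representation on which `N` acts through `χ`
  let W : Submodule ℂ (G → ℂ) :=
    { carrier := {f | ∀ (n : ↥N) (x : G), f (↑n * x) = (χ n : ℂ) * f x}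
      add_mem' := by
        intro f₁ f₂ h₁ h₂ n x
        simp only [Pi.add_apply, h₁ n x, h₂ n x]; ring
      zero_mem' := by intro n x; simp
      smul_mem' := by
        intro c f hf n x
        simp only [Pi.smul_apply, smul_eq_mul, hf n x]; ring }
  have hmemW : ∀ f : G → ℂ, f ∈ W ↔ ∀ (n : ↥N) (x : G), f (↑n * x) = (χ n : ℂ) * f x :=
    fun f => Iff.rfl
  have hWinv : ∀ g : G, ∀ f ∈ W, rreg (k := ℂ) g f ∈ W := by
    intro g f hf n x
    simp only [rreg_apply]
    rw [mul_assoc]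
    exact hf n (x * g)
  have hWne : W ≠ ⊥ := by
    intro hbot
    have hf₀ : (fun x => if h : x ∈ N then ((χ ⟨x, h⟩ : ℂˣ) : ℂ) else 0) ∈ W := by
      intro n x
      by_cases hx : x ∈ N
      · have hnx : (↑n * x) ∈ N := mul_mem n.2 hx
        simp only [dif_pos hx, dif_pos hnx]
        have : (⟨↑n * x, hnx⟩ : ↥N) = n * ⟨x, hx⟩ := rfl
        rw [this, map_mul, Units.val_mul]
      · have hnx : (↑n * x) ∉ N := by
          intro hmem
          exact hx (by simpa using mul_mem (inv_mem n.2) hmem)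
        simp only [dif_neg hx, dif_neg hnx, mul_zero]
    rw [hbot] at hf₀
    have := congrFun ((Submodule.mem_bot ℂ).mp hf₀) 1
    simp only [dif_pos N.one_mem] at this
    rw [show (⟨(1:G), N.one_mem⟩ : ↥N) = 1 from rfl, map_one] at this
    simp at this
  -- choose a minimal nonzero invariant submodule `U ≤ W`
  let S : Set (Submodule ℂ (G → ℂ)) :=
    {U | U ≤ W ∧ U ≠ ⊥ ∧ ∀ g : G, ∀ f ∈ U, rreg (k := ℂ) g f ∈ U}
  have hWS : W ∈ S := ⟨le_rfl, hWne, hWinv⟩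
  have hTne : ((fun U : Submodule ℂ (G → ℂ) => Module.finrank ℂ U) '' S).Nonempty :=
    ⟨_, W, hWS, rfl⟩
  obtain ⟨U, hUS, hUrank⟩ := Nat.sInf_mem hTne
  have hmin : ∀ U' ∈ S, U' ≤ U → U' = U := by
    intro U' hU' hle
    exact Submodule.eq_of_le_of_finrank_le hle
      (le_trans (le_of_eq hUrank) (Nat.sInf_le ⟨U', hU', rfl⟩))
  have hUW : U ≤ W := hUS.1
  have hUne : U ≠ ⊥ := hUS.2.1
  have hUinv : ∀ g : G, ∀ f ∈ U, rreg (k := ℂ) g f ∈ U := hUS.2.2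
  -- the candidate representation
  let ρU : Representation ℂ G ↥U := Representation.subRep (rreg (k := ℂ)) U hUinv
  let X : FDRep ℂ G := FDRep.of ρU
  set d : ℕ := Module.finrank ℂ ↥U with hd
  haveI hUnontriv : Nontrivial ↥U := Submodule.nontrivial_iff_ne_bot.mpr hUne
  have hd0 : d ≠ 0 := Module.finrank_pos.ne'
  -- `N` acts on `U` by the scalar `χ`
  have hscalar : ∀ (n : ↥N) (u : ↥U), ρU ↑n u = (χ n : ℂ) • u := by
    intro n u
    apply Subtype.ext
    show rreg (k := ℂ) (↑n) ↑u = (χ n : ℂ) • (↑u : G → ℂ)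
    funext x
    have hu : (↑u : G → ℂ) ∈ W := hUW u.2
    have hm : x * ↑n * x⁻¹ ∈ N := hN.conj_mem ↑n n.2 x
    have h1 : (↑u : G → ℂ) ((⟨x * ↑n * x⁻¹, hm⟩ : ↥N) * x) = (χ ⟨x * ↑n * x⁻¹, hm⟩ : ℂ) * (↑u : G → ℂ) x :=
      hu ⟨x * ↑n * x⁻¹, hm⟩ x
    have h2 : (⟨x * ↑n * x⁻¹, hm⟩ : ↥N) * x = x * ↑n := by
      show x * ↑n * x⁻¹ * x = x * ↑n
      group
    have h3 : χ ⟨x * ↑n * x⁻¹, hm⟩ = χ n := by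
      refine Eq.trans ?_ (hinv x⁻¹ n)
      exact congrArg χ (Subtype.ext (by group))
    show (↑u : G → ℂ) (x * ↑n) = (χ n : ℂ) * (↑u : G → ℂ) x
    rw [← h2]
    rw [h1, h3]
  have hρUid : ∀ n : ↥N, ρU ↑n = (χ n : ℂ) • (LinearMap.id : ↥U →ₗ[ℂ] ↥U) := by
    intro n
    apply LinearMap.ext
    intro u
    simpa using hscalar n u
  have hchar : ∀ g : G, X.character g = LinearMap.trace ℂ ↥U (ρU g) := fun g => rfl
  have hcharN : ∀ n : ↥N, X.character ↑n = (χ n : ℂ) * d := by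
    intro n
    rw [hchar, hρUid]
    rw [map_smul, LinearMap.trace_id, smul_eq_mul]
  have hcharOff : ∀ g : G, g ∉ N → X.character g = 0 := by
    intro g hg
    have hex : ∃ h : G, χ ⟨g⁻¹ * h⁻¹ * g * h, hcomm g h⟩ ≠ 1 := by
      by_contra hall
      push_neg at hall
      exact hg (hnd g hall)
    obtain ⟨h, hc1⟩ := hex
    set c : ↥N := ⟨g⁻¹ * h⁻¹ * g * h, hcomm g h⟩ with hcdef
    have e1 : X.character (h⁻¹ * g * (h⁻¹)⁻¹) = X.character g := FDRep.char_conj X g h⁻¹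
    have e2 : h⁻¹ * g * (h⁻¹)⁻¹ = g * ↑c := by
      show h⁻¹ * g * (h⁻¹)⁻¹ = g * (g⁻¹ * h⁻¹ * g * h)
      group
    have e3 : X.character (g * ↑c) = (χ c : ℂ) * X.character g := by
      rw [hchar, hchar, map_mul, hρUid c, mul_smul_comm, map_smul, smul_eq_mul, Module.End.mul_eq_comp, LinearMap.comp_id]
    have e4 : X.character g = (χ c : ℂ) * X.character g := by
      rw [← e3, ← e2, e1]
    have e5 : ((χ c : ℂ) - 1) * X.character g = 0 := by
      rw [sub_mul, one_mul, ← e4, sub_self]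
    rcases mul_eq_zero.mp e5 with h5 | h5
    · exact (hc1 (Units.ext (by simpa using sub_eq_zero.mp h5))).elim
    · exact h5
  -- `X` is simple
  have hsimple : Simple X := by
    refine simple_of_irreducible ρU hUnontriv ?_
    intro q hqinv
    by_cases hqb : q = ⊥
    · exact Or.inl hqb
    refine Or.inr ?_
    have hmapinv : ∀ g : G, ∀ v ∈ q.map U.subtype, rreg (k := ℂ) g v ∈ q.map U.subtype := by
      rintro g v ⟨u, hu, rfl⟩
      exact ⟨ρU g u, hqinv g u hu, rfl⟩
    have hmapne : q.map U.subtype ≠ ⊥ := by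
      obtain ⟨u, hu, hune⟩ := (Submodule.ne_bot_iff q).mp hqb
      intro hb
      have hmem : (↑u : G → ℂ) ∈ q.map U.subtype := ⟨u, hu, rfl⟩
      rw [hb] at hmem
      exact hune (Subtype.ext ((Submodule.mem_bot ℂ).mp hmem))
    have hmS : q.map U.subtype ∈ S :=
      ⟨le_trans (Submodule.map_subtype_le U q) hUW, hmapne, hmapinv⟩
    have hqU : q.map U.subtype = U := hmin _ hmS (Submodule.map_subtype_le U q)
    ext u
    simp only [Submodule.mem_top, iff_true]
    have hmem : (↑u : G → ℂ) ∈ q.map U.subtype := hqU.symm ▸ u.2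
    obtain ⟨u', hu', hval⟩ := hmem
    rwa [← show u' = u from Subtype.ext hval]
  haveI := hsimple
  letI : Fintype G := ‹Fintype G›
  letI : Invertible ((Fintype.card G) : ℂ) :=
    invertibleOfNonzero (Nat.cast_ne_zero.mpr Fintype.card_ne_zero)
  -- sums of functions vanishing off `N`
  have hsumG : ∀ F : G → ℂ, (∀ g ∉ N, F g = 0) → ∑ g : G, F g = ∑ n : ↥N, F ↑n := by
    intro F hF
    have h1 : ∑ g ∈ Finset.univ.filter (· ∈ N), F g = ∑ g : G, F g :=
      Finset.sum_filter_of_ne (fun x _ hx => by_contra fun hn => hx (hF x hn))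
    rw [← h1]
    exact Finset.sum_subtype _ (by simp) F
  -- the square of the dimension is the index
  have hXX' : ⅟(Fintype.card G : ℂ) • ∑ g : G, X.character g * X.character g⁻¹ = 1 := by
    have hXX := FDRep.char_orthonormal (k := ℂ) (G := G) X X
    rw [if_pos ⟨Iso.refl X⟩] at hXX
    rw [Nat.card_eq_fintype_card, ← invOf_eq_inv, ← smul_eq_mul] at hXX
    exact_mod_cast hXX
  have hsum1 : ∑ g : G, X.character g * X.character g⁻¹ = (Fintype.card ↥N : ℂ) * (d:ℂ)^2 := by
    rw [hsumG _ (fun g hg => by rw [hcharOff g hg, zero_mul])]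
    have hterm : ∀ n : ↥N, X.character ↑n * X.character (↑n : G)⁻¹ = (d:ℂ)^2 := by
      intro n
      have h1 : ((↑n : G))⁻¹ = ((n⁻¹ : ↥N) : G) := rfl
      have h2 : (χ n : ℂ) * (χ n⁻¹ : ℂ) = 1 := by
        rw [← Units.val_mul, ← map_mul, mul_inv_cancel, map_one, Units.val_one]
      rw [h1, hcharN, hcharN]
      calc (χ n : ℂ) * d * ((χ n⁻¹ : ℂ) * d) = ((χ n : ℂ) * (χ n⁻¹ : ℂ)) * (d * d) := by ring
        _ = (d:ℂ)^2 := by rw [h2, one_mul, sq]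
    rw [Finset.sum_congr rfl (fun n _ => hterm n), Finset.sum_const, Finset.card_univ,
      nsmul_eq_mul]
  have hcard : (Fintype.card ↥N : ℂ) * (d:ℂ)^2 = (Fintype.card G : ℂ) := by
    rw [hsum1, smul_eq_mul] at hXX'
    have ha : (Fintype.card G : ℂ) * ⅟(Fintype.card G : ℂ) = 1 := mul_invOf_self _
    calc (Fintype.card ↥N : ℂ) * (d:ℂ)^2
        = ((Fintype.card G : ℂ) * ⅟(Fintype.card G : ℂ)) * ((Fintype.card ↥N : ℂ) * (d:ℂ)^2) := by
          rw [ha, one_mul]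
      _ = (Fintype.card G : ℂ) * (⅟(Fintype.card G : ℂ) * ((Fintype.card ↥N : ℂ) * (d:ℂ)^2)) :=
          mul_assoc _ _ _
      _ = (Fintype.card G : ℂ) * 1 := by rw [hXX']
      _ = (Fintype.card G : ℂ) := mul_one _
  have hindex : N.index * Fintype.card ↥N = Fintype.card G := by
    rw [← Nat.card_eq_fintype_card, ← Nat.card_eq_fintype_card]
    exact Subgroup.index_mul_card N
  have hfinal : d ^ 2 = N.index := by
    have hc : ((Fintype.card ↥N : ℕ) : ℂ) ≠ 0 := Nat.cast_ne_zero.mpr Fintype.card_ne_zero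
    have h2 : (Fintype.card ↥N : ℂ) * ((d:ℂ)^2) = (Fintype.card ↥N : ℂ) * (N.index : ℂ) := by
      rw [hcard, ← hindex]
      push_cast
      ring
    exact_mod_cast mul_left_cancel₀ hc h2
  -- conjugation formula
  have hconj : ∀ n : ↥N, (starRingEnd ℂ) ((χ n : ℂ)) = ((χ n⁻¹ : ℂˣ) : ℂ) := by
    intro n
    have hpow : ((χ n : ℂ)) ^ (Fintype.card ↥N) = 1 := by
      rw [← Units.val_pow_eq_pow_val, ← map_pow, pow_card_eq_one, map_one, Units.val_one]
    have hnorm : ‖(χ n : ℂ)‖ = 1 :=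
      Complex.norm_eq_one_of_pow_eq_one hpow Fintype.card_ne_zero
    rw [← RCLike.inv_eq_conj hnorm, map_inv]
    exact (Units.val_inv_eq_inv_val _).symm
  -- `X` contains `χ`
  have hcontX : containsChar ↥N (fun n => X.character ↑n) (fun n => (χ n : ℂ)) := by
    rw [containsChar_iff _ _ inferInstance]
    have heq : ∀ n : ↥N, X.character ↑n * (starRingEnd ℂ) ((χ n : ℂ))
        = (d:ℂ) * ((Complex.normSq (χ n) : ℝ) : ℂ) := by
      intro n
      rw [hcharN, mul_comm ((χ n : ℂ)) (d:ℂ), mul_assoc, Complex.mul_conj]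
    rw [Finset.sum_congr rfl (fun n _ => heq n), ← Finset.mul_sum]
    refine mul_ne_zero (Nat.cast_ne_zero.mpr hd0) ?_
    rw [← Complex.ofReal_sum, Complex.ofReal_ne_zero]
    exact (Finset.sum_pos (fun n _ => Complex.normSq_pos.mpr (Units.ne_zero _))
      Finset.univ_nonempty).ne'
  refine ⟨X, hsimple, hcontX, hfinal, ?_⟩
  -- uniqueness
  intro ρ' hs' hcont'
  haveI := hs'
  rw [containsChar_iff _ _ inferInstance] at hcont'
  have horth' : ⅟(Fintype.card G : ℂ) • ∑ g : G, ρ'.character g * X.character g⁻¹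
      = if Nonempty (ρ' ≅ X) then (1:ℂ) else 0 := by
    have h := FDRep.char_orthonormal (k := ℂ) (G := G) ρ' X
    rw [Nat.card_eq_fintype_card, ← invOf_eq_inv, ← smul_eq_mul] at h
    exact_mod_cast h
  by_contra hno
  rw [if_neg (fun h => hno h)] at horth'
  have hsum2 : ∑ g : G, ρ'.character g * X.character g⁻¹
      = (d:ℂ) * ∑ n : ↥N, ρ'.character ↑n * (starRingEnd ℂ) ((χ n : ℂ)) := by
    rw [hsumG _ (fun g hg => by
      rw [hcharOff g⁻¹ (fun hm => hg (by simpa using inv_mem hm)), mul_zero])]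
    rw [Finset.mul_sum]
    refine Finset.sum_congr rfl fun n _ => ?_
    have h1 : ((↑n : G))⁻¹ = ((n⁻¹ : ↥N) : G) := rfl
    rw [h1, hcharN, hconj]
    ring
  rw [hsum2, smul_eq_mul] at horth'
  have hinv0 : (⅟(Fintype.card G : ℂ)) ≠ 0 := by
    intro h0
    have h1 := mul_invOf_self (Fintype.card G : ℂ)
    rw [h0, mul_zero] at h1
    exact one_ne_zero h1.symm
  apply hcont'
  rcases mul_eq_zero.mp horth' with h | h
  · exact absurd h hinv0
  rcases mul_eq_zero.mp h with h | h
  · exact absurd h (Nat.cast_ne_zero.mpr hd0)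
  · exact h
end

section
/- Let G be a finite group, N ⊴ G, M ≤ G with G = NM. Let ψ_1: N → C^× and ψ_2: M → C^× be one-dimensional representations such that ψ_1 is invariant under conjugation by M and ψ_1|_{M∩N} = ψ_2|_{M∩N}. Then the function ψ_1ψ_2 : G → C^× defined by ψ_1ψ_2(nm) = ψ_1(n)ψ_2(m) for n ∈ N, m ∈ M is a well-defined group homomorphism, and it is the unique one-dimensional representation of G extending both ψ_1 and ψ_2. -/
/-- Let `G` be a group, `N ⊴ G`, `M ≤ G` with `G = NM`, and let `ψ₁ : N → ℂˣ`,
`ψ₂ : M → ℂˣ` be one-dimensional representations such that `ψ₁` is invariant under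
conjugation by `M` and `ψ₁`, `ψ₂` agree on `M ∩ N`. Then `ψ₁ψ₂(nm) = ψ₁(n)ψ₂(m)` is a
well-defined group homomorphism `G → ℂˣ`, and it is the unique one-dimensional
representation of `G` extending both `ψ₁` and `ψ₂`. -/
theorem extend_linear_characters (G : Type) [Group G]
    (N : Subgroup G) (hN : N.Normal) (M : Subgroup G)
    (hNM : ∀ g : G, ∃ n ∈ N, ∃ m ∈ M, g = n * m)
    (ψ₁ : ↥N →* ℂˣ) (ψ₂ : ↥M →* ℂˣ)
    (hinv : ∀ (m : ↥M) (n : ↥N),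
      ψ₁ ⟨(↑m)⁻¹ * ↑n * ↑m, by simpa using hN.conj_mem ↑n n.2 (↑m)⁻¹⟩ = ψ₁ n)
    (hagree : ∀ (g : G) (hgN : g ∈ N) (hgM : g ∈ M), ψ₁ ⟨g, hgN⟩ = ψ₂ ⟨g, hgM⟩) :
    ∃! Ψ : G →* ℂˣ,
      (∀ n : ↥N, Ψ ↑n = ψ₁ n) ∧ (∀ m : ↥M, Ψ ↑m = ψ₂ m) ∧
      ∀ (n m : G) (hn : n ∈ N) (hm : m ∈ M), Ψ (n * m) = ψ₁ ⟨n, hn⟩ * ψ₂ ⟨m, hm⟩ := by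
  classical
  -- well-definedness
  have key : ∀ (n n' m m' : G) (hn : n ∈ N) (hn' : n' ∈ N) (hm : m ∈ M) (hm' : m' ∈ M),
      n * m = n' * m' → ψ₁ ⟨n, hn⟩ * ψ₂ ⟨m, hm⟩ = ψ₁ ⟨n', hn'⟩ * ψ₂ ⟨m', hm'⟩ := by
    intro n n' m m' hn hn' hm hm' h
    have hk : n'⁻¹ * n = m' * m⁻¹ := by
      rw [inv_mul_eq_iff_eq_mul, ← mul_assoc, ← h, mul_assoc, mul_inv_cancel, mul_one]
    have hkN : n'⁻¹ * n ∈ N := mul_mem (inv_mem hn') hn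
    have hkM : n'⁻¹ * n ∈ M := hk ▸ mul_mem hm' (inv_mem hm)
    have h1 : ψ₁ ⟨n, hn⟩ = ψ₁ ⟨n', hn'⟩ * ψ₁ ⟨n'⁻¹ * n, hkN⟩ := by
      rw [← map_mul]
      congr 1
      ext
      simp [mul_assoc]
    have h2 : ψ₂ ⟨m', hm'⟩ = ψ₂ ⟨n'⁻¹ * n, hkM⟩ * ψ₂ ⟨m, hm⟩ := by
      rw [← map_mul]
      congr 1
      ext
      simp [hk, mul_assoc]
    rw [h1, h2, hagree (n'⁻¹ * n) hkN hkM, mul_assoc]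
  have hf : ∀ g : G, ∃ c : ℂˣ, ∀ (n m : G) (hn : n ∈ N) (hm : m ∈ M),
      g = n * m → c = ψ₁ ⟨n, hn⟩ * ψ₂ ⟨m, hm⟩ := by
    intro g
    obtain ⟨n, hn, m, hm, rfl⟩ := hNM g
    exact ⟨ψ₁ ⟨n, hn⟩ * ψ₂ ⟨m, hm⟩, fun n' m' hn' hm' h =>
      key n n' m m' hn hn' hm hm' h⟩
  set f : G → ℂˣ := fun g => (hf g).choose with hfdef
  have hfspec : ∀ (g n m : G) (hn : n ∈ N) (hm : m ∈ M),
      g = n * m → f g = ψ₁ ⟨n, hn⟩ * ψ₂ ⟨m, hm⟩ := fun g => (hf g).choose_spec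
  have hmul : ∀ a b : G, f (a * b) = f a * f b := by
    intro a b
    obtain ⟨n₁, hn₁, m₁, hm₁, rfl⟩ := hNM a
    obtain ⟨n₂, hn₂, m₂, hm₂, rfl⟩ := hNM b
    have hconjN : m₁ * n₂ * m₁⁻¹ ∈ N := by simpa using hN.conj_mem n₂ hn₂ m₁
    have hnn : n₁ * (m₁ * n₂ * m₁⁻¹) ∈ N := mul_mem hn₁ hconjN
    have hmm : m₁ * m₂ ∈ M := mul_mem hm₁ hm₂
    have hdecomp : n₁ * m₁ * (n₂ * m₂) = (n₁ * (m₁ * n₂ * m₁⁻¹)) * (m₁ * m₂) := by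
      group
    rw [hfspec _ _ _ hnn hmm hdecomp, hfspec _ _ _ hn₁ hm₁ rfl,
      hfspec _ _ _ hn₂ hm₂ rfl]
    have h1 : ψ₁ ⟨n₁ * (m₁ * n₂ * m₁⁻¹), hnn⟩
        = ψ₁ ⟨n₁, hn₁⟩ * ψ₁ ⟨m₁ * n₂ * m₁⁻¹, hconjN⟩ := by
      rw [← map_mul]; rfl
    have h2 : ψ₁ ⟨m₁ * n₂ * m₁⁻¹, hconjN⟩ = ψ₁ ⟨n₂, hn₂⟩ := by
      have := hinv (⟨m₁, hm₁⟩ : M)⁻¹ ⟨n₂, hn₂⟩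
      simpa using this
    have h3 : ψ₂ ⟨m₁ * m₂, hmm⟩ = ψ₂ ⟨m₁, hm₁⟩ * ψ₂ ⟨m₂, hm₂⟩ := by
      rw [← map_mul]; rfl
    rw [h1, h2, h3, mul_mul_mul_comm]
  have e1 : ψ₁ ⟨1, one_mem N⟩ = 1 := map_one ψ₁
  have e2 : ψ₂ ⟨1, one_mem M⟩ = 1 := map_one ψ₂
  have hone : f 1 = 1 := by
    have := hfspec 1 1 1 (one_mem N) (one_mem M) (by group)
    simpa [e1, e2] using this
  refine ⟨⟨⟨f, hone⟩, hmul⟩, ⟨?_, ?_, ?_⟩, ?_⟩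
  · intro n
    have := hfspec n n 1 n.2 (one_mem M) (by group)
    simpa [e2] using this
  · intro m
    have := hfspec m 1 m (one_mem N) m.2 (by group)
    simpa [e1] using this
  · intro n m hn hm
    exact hfspec _ _ _ hn hm rfl
  · intro Ψ ⟨_, _, h3⟩
    apply MonoidHom.ext
    intro g
    obtain ⟨n, hn, m, hm, rfl⟩ := hNM g
    rw [h3 n m hn hm]
    exact (hfspec _ _ _ hn hm rfl).symm
end

section
/- Let q be a prime power and n ≥ 2. Consider the action of GL_n(F_q) on F_q^n × F_q^n (column vectors times row vectors) given by D·(v, w^T) = (Dv, w^T D^{-1}). This action has exactly q + 3 orbits: the orbit of (0,0); the orbit of (0, e_1^T); the orbit of (e_1, 0); the orbit of (e_1, e_2^T); and for each u ∈ F_q^×, the orbit of (e_1, u·e_1^T). -/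
open Matrix

/-- The action of `GL_n(F)` on pairs (column vector, row vector):
`D • (v, wᵀ) = (D v, wᵀ D⁻¹)`. -/
noncomputable instance glPairSMul (F : Type) [Field F] [Fintype F] (m : ℕ) :
    SMul (GL (Fin m) F) ((Fin m → F) × (Fin m → F)) :=
  ⟨fun g p => ((↑g : Matrix (Fin m) (Fin m) F) *ᵥ p.1,
      p.2 ᵥ* (↑g⁻¹ : Matrix (Fin m) (Fin m) F))⟩

noncomputable instance glPairAction (F : Type) [Field F] [Fintype F] (m : ℕ) :
    MulAction (GL (Fin m) F) ((Fin m → F) × (Fin m → F)) where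
  one_smul p := by
    show ((↑(1 : GL (Fin m) F) : Matrix (Fin m) (Fin m) F) *ᵥ p.1,
        p.2 ᵥ* (↑(1 : GL (Fin m) F)⁻¹ : Matrix (Fin m) (Fin m) F)) = p
    simp
  mul_smul g h p := by
    show ((↑(g * h) : Matrix (Fin m) (Fin m) F) *ᵥ p.1,
        p.2 ᵥ* (↑(g * h)⁻¹ : Matrix (Fin m) (Fin m) F))
      = ((↑g : Matrix (Fin m) (Fin m) F) *ᵥ ((↑h : Matrix (Fin m) (Fin m) F) *ᵥ p.1),
        (p.2 ᵥ* (↑h⁻¹ : Matrix (Fin m) (Fin m) F)) ᵥ* (↑g⁻¹ : Matrix (Fin m) (Fin m) F))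
    rw [Matrix.mulVec_mulVec, Matrix.vecMul_vecMul, Units.val_mul, _root_.mul_inv_rev,
      Units.val_mul]


section aux
open Module

variable {F : Type} [Field F]



/-- the dot-product functional `u ↦ w ⬝ᵥ u`. -/
noncomputable def dotL {n : ℕ} (w : Fin n → F) : (Fin n → F) →ₗ[F] F where
  toFun u := w ⬝ᵥ u
  map_add' u v := by simp [dotProduct_add]
  map_smul' c u := by simp [dotProduct_smul, smul_eq_mul]

@[simp] lemma dotL_apply {n : ℕ} (w u : Fin n → F) : dotL w u = w ⬝ᵥ u := rfl

/-- produce a basis from a linearly independent family with a cast on the index. -/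
lemma exists_basis_of_li {W : Type} [AddCommGroup W] [Module F W]
    {a b : ℕ} (hb : 0 < b) (h : a = b) (f : Fin a → W) (hf : LinearIndependent F f)
    (hcard : b = finrank F W) :
    ∃ bas : Basis (Fin b) F W, ∀ j : Fin b, bas j = f ⟨j.1, by omega⟩ := by
  haveI : Nonempty (Fin b) := ⟨⟨0, hb⟩⟩
  have hg : LinearIndependent F (f ∘ ⇑(finCongr h.symm)) :=
    hf.comp _ (Equiv.injective _)
  refine ⟨basisOfLinearIndependentOfCardEqFinrank hg (by simpa using hcard), fun j => ?_⟩
  rw [coe_basisOfLinearIndependentOfCardEqFinrank]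
  rfl

/-- a nonzero vector can be extended to a basis (with the vector first). -/
lemma exists_basis_head {W : Type} [AddCommGroup W] [Module F W] [FiniteDimensional F W]
    {v : W} (hv : v ≠ 0) {m : ℕ} (hm : finrank F W = m + 1) :
    ∃ b : Basis (Fin (m + 1)) F W, b 0 = v := by
  obtain ⟨W', hW'⟩ := Submodule.exists_isCompl (Submodule.span F {v})
  have h1 : finrank F (Submodule.span F {v} : Submodule F W) = 1 := finrank_span_singleton hv
  have h2 : finrank F W' = m := by
    have := Submodule.finrank_add_eq_of_isCompl hW'
    omega
  let k := Module.finBasis F W'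
  have hknotv : v ∉ W' := by
    intro hvW'
    have : v ∈ Submodule.span F {v} ⊓ W' :=
      ⟨Submodule.mem_span_singleton_self v, hvW'⟩
    rw [hW'.inf_eq_bot] at this
    exact hv this
  have hli : LinearIndependent F (Fin.cons v (fun i => (k i : W)) :
      Fin (finrank F W' + 1) → W) := by
    rw [linearIndependent_fin_cons]
    constructor
    · exact k.linearIndependent.map' W'.subtype (Submodule.ker_subtype _)
    · intro hmem
      apply hknotv
      have : Submodule.span F (Set.range fun i => (k i : W)) = W' := by
        have : (Set.range fun i => (k i : W)) = W'.subtype '' (Set.range ⇑k) := by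
          ext x; simp [Set.range_comp]
        rw [this, ← Submodule.map_span, k.span_eq, Submodule.map_top,
          Submodule.range_subtype]
      rwa [this] at hmem
  obtain ⟨b, hb⟩ := exists_basis_of_li (Nat.succ_pos m) (by omega)
    (Fin.cons v (fun i => (k i : W))) hli (by omega)
  refine ⟨b, ?_⟩
  have := hb 0
  simpa using this

section kernel
variable {n : ℕ} {w : Fin n → F}

lemma exists_dot_one (hw : w ≠ 0) : ∃ z : Fin n → F, w ⬝ᵥ z = 1 := by
  obtain ⟨i, hi⟩ := Function.ne_iff.mp hw
  have hi' : w i ≠ 0 := by simpa using hi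
  refine ⟨((w i)⁻¹ • (Pi.single i (1:F) : Fin n → F)), ?_⟩
  rw [dotProduct_smul, dotProduct_single]
  field_simp
  rw [smul_eq_mul, one_div, inv_mul_cancel₀ hi']

lemma finrank_ker_dot (hw : w ≠ 0) :
    finrank F (LinearMap.ker (dotL w)) + 1 = n := by
  obtain ⟨z, hz⟩ := exists_dot_one hw
  have hr : LinearMap.range (dotL w) = ⊤ := by
    rw [LinearMap.range_eq_top]
    intro c
    exact ⟨c • z, by simp [dotProduct_smul, hz, smul_eq_mul]⟩
  have := LinearMap.finrank_range_add_finrank_ker (dotL w)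
  rw [hr] at this
  simp [finrank_fin_fun] at this
  omega
end kernel

lemma span_range_coe_basis {W : Type} [AddCommGroup W] [Module F W] (K : Submodule F W)
    {ι : Type} (k : Basis ι F K) :
    Submodule.span F (Set.range fun i => (k i : W)) = K := by
  have h : (Set.range fun i => (k i : W)) = K.subtype '' (Set.range ⇑k) := by
    ext x; simp [Set.range_comp]
  rw [h, ← Submodule.map_span, k.span_eq, Submodule.map_top, Submodule.range_subtype]

section cases
variable {n : ℕ}

/-- Case A: `w ⬝ᵥ y ≠ 0`: basis with head `y` and the rest in `ker w`. -/
lemma basis_case_A (hn : 0 < n) {w y : Fin n → F} (hy : w ⬝ᵥ y ≠ 0) :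
    ∃ b : Basis (Fin n) F (Fin n → F),
      b ⟨0, hn⟩ = y ∧ ∀ j : Fin n, j.1 ≠ 0 → w ⬝ᵥ b j = 0 := by
  have hw : w ≠ 0 := by rintro rfl; simp at hy
  have hrank : finrank F (LinearMap.ker (dotL w)) + 1 = n := finrank_ker_dot hw
  let k := Module.finBasis F (LinearMap.ker (dotL w))
  have hli : LinearIndependent F (Fin.cons y (fun i => (k i : Fin n → F)) :
      Fin (finrank F (LinearMap.ker (dotL w)) + 1) → (Fin n → F)) := by
    rw [linearIndependent_fin_cons]
    refine ⟨k.linearIndependent.map' (LinearMap.ker (dotL w)).subtype (Submodule.ker_subtype _), ?_⟩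
    rw [span_range_coe_basis _ k]
    intro hmem
    exact hy (by simpa using hmem)
  obtain ⟨b, hb⟩ := exists_basis_of_li hn hrank _ hli (finrank_fin_fun F).symm
  refine ⟨b, ?_, ?_⟩
  · have := hb ⟨0, hn⟩
    simpa using this
  · intro j hj
    obtain ⟨i, hi⟩ : ∃ i, j.1 = i + 1 := ⟨j.1 - 1, by omega⟩
    have hlt : i < finrank F (LinearMap.ker (dotL w)) := by have := j.2; omega
    rw [hb j]
    have hcast : (⟨j.1, by omega⟩ : Fin (finrank F (LinearMap.ker (dotL w)) + 1))
        = Fin.succ ⟨i, hlt⟩ := by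
      rw [Fin.succ_mk]; exact Fin.ext (by simp [hi])
    rw [hcast, Fin.cons_succ]
    exact LinearMap.mem_ker.mp (k ⟨i, hlt⟩).2

/-- Case B: `y ≠ 0`, `w ⬝ᵥ y = 0`, `w ≠ 0`. -/
lemma basis_case_B (hn : 2 ≤ n) {w y : Fin n → F} (hw : w ≠ 0) (hy : y ≠ 0)
    (hwy : w ⬝ᵥ y = 0) :
    ∃ b : Basis (Fin n) F (Fin n → F),
      b ⟨0, by omega⟩ = y ∧ w ⬝ᵥ b ⟨1, by omega⟩ = 1 ∧
      ∀ j : Fin n, j.1 ≠ 0 → j.1 ≠ 1 → w ⬝ᵥ b j = 0 := by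
  have hrank : finrank F (LinearMap.ker (dotL w)) + 1 = n := finrank_ker_dot hw
  obtain ⟨z, hz⟩ := exists_dot_one hw
  have hyK : y ∈ LinearMap.ker (dotL w) := by rw [LinearMap.mem_ker]; simpa using hwy
  have hyK0 : (⟨y, hyK⟩ : LinearMap.ker (dotL w)) ≠ 0 := by
    intro h; exact hy (by simpa using congrArg (Subtype.val) h)
  have hmK : finrank F (LinearMap.ker (dotL w)) = (n - 2) + 1 := by omega
  obtain ⟨k, hk0⟩ := exists_basis_head hyK0 hmK
  have hli : LinearIndependent F (Fin.cons z (fun i => (k i : Fin n → F)) :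
      Fin ((n - 2) + 1 + 1) → (Fin n → F)) := by
    rw [linearIndependent_fin_cons]
    refine ⟨k.linearIndependent.map' (LinearMap.ker (dotL w)).subtype (Submodule.ker_subtype _), ?_⟩
    rw [span_range_coe_basis _ k]
    intro hmem
    have := LinearMap.mem_ker.mp hmem
    simp [hz] at this
  have hli2 : LinearIndependent F
      ((Fin.cons z (fun i => (k i : Fin n → F)) : Fin ((n - 2) + 1 + 1) → (Fin n → F))
        ∘ ⇑(Equiv.swap 0 1)) :=
    hli.comp _ (Equiv.injective _)
  obtain ⟨b, hb⟩ := exists_basis_of_li (by omega) (by omega : (n-2)+1+1 = n) _ hli2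
    (finrank_fin_fun F).symm
  refine ⟨b, ?_, ?_, ?_⟩
  · rw [hb ⟨0, by omega⟩]
    have h0 : (⟨(0:ℕ), by omega⟩ : Fin ((n-2)+1+1)) = 0 := Fin.ext (by simp)
    simp only [Function.comp_apply, h0, Equiv.swap_apply_left]
    rw [← Fin.succ_zero_eq_one, Fin.cons_succ]
    exact congrArg Subtype.val hk0
  · rw [hb ⟨1, by omega⟩]
    have h1 : (⟨(1:ℕ), by omega⟩ : Fin ((n-2)+1+1)) = 1 := Fin.ext (by simp)
    simp only [Function.comp_apply, h1, Equiv.swap_apply_right, Fin.cons_zero]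
    exact hz
  · intro j hj0 hj1
    rw [hb j]
    obtain ⟨i, hi⟩ : ∃ i, j.1 = i + 1 + 1 := ⟨j.1 - 2, by omega⟩
    have hswap : (Equiv.swap (0 : Fin ((n-2)+1+1)) 1) ⟨j.1, by omega⟩
        = ⟨j.1, by omega⟩ := by
      apply Equiv.swap_apply_of_ne_of_ne
      · exact Fin.ne_of_val_ne (by simpa using hj0)
      · exact Fin.ne_of_val_ne (by simpa using hj1)
    simp only [Function.comp_apply, hswap]
    have hlt : i + 1 < (n - 2) + 1 := by have := j.2; omega
    have hcast : (⟨j.1, by omega⟩ : Fin ((n-2)+1+1)) = Fin.succ ⟨i + 1, hlt⟩ := by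
      exact Fin.ext (by simp only [Fin.val_succ]; omega)
    rw [hcast, Fin.cons_succ]
    exact LinearMap.mem_ker.mp (k ⟨i + 1, hlt⟩).2

/-- Case C: `y ≠ 0`: a basis with head `y`. -/
lemma basis_case_C (hn : 0 < n) {y : Fin n → F} (hy : y ≠ 0) :
    ∃ b : Basis (Fin n) F (Fin n → F), b ⟨0, hn⟩ = y := by
  have hm : finrank F (Fin n → F) = (n - 1) + 1 := by rw [finrank_fin_fun]; omega
  obtain ⟨b', hb'⟩ := exists_basis_head hy hm
  refine ⟨b'.reindex (finCongr (by omega : (n-1)+1 = n)), ?_⟩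
  rw [Basis.reindex_apply]
  have : (finCongr (by omega : (n-1)+1 = n)).symm ⟨0, hn⟩ = 0 := Fin.ext (by simp)
  rw [this, hb']

end cases


section withFintype
variable [Fintype F] {n : ℕ}

lemma glsmul_def (g : GL (Fin n) F) (p : (Fin n → F) × (Fin n → F)) :
    g • p = ((↑g : Matrix (Fin n) (Fin n) F) *ᵥ p.1,
      p.2 ᵥ* (↑g⁻¹ : Matrix (Fin n) (Fin n) F)) := rfl

lemma toMatrix_mulVec_single (b : Basis (Fin n) F (Fin n → F)) (j : Fin n) :
    ((Pi.basisFun F (Fin n)).toMatrix ⇑b) *ᵥ Pi.single j 1 = b j := by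
  funext i
  rw [mulVec_single]
  simp [Basis.toMatrix_apply]

lemma mem_orbit_mk (b : Basis (Fin n) F (Fin n → F)) (x v r w : Fin n → F)
    (h1 : ((Pi.basisFun F (Fin n)).toMatrix ⇑b) *ᵥ x = v)
    (h2 : ∀ j, w ⬝ᵥ b j = r j) :
    ((v, w) : (Fin n → F) × (Fin n → F)) ∈ MulAction.orbit (GL (Fin n) F) (x, r) := by
  letI := (Pi.basisFun F (Fin n)).invertibleToMatrix b
  let g : GL (Fin n) F := unitOfInvertible ((Pi.basisFun F (Fin n)).toMatrix ⇑b)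
  have hg : (↑g : Matrix (Fin n) (Fin n) F) = (Pi.basisFun F (Fin n)).toMatrix ⇑b := rfl
  have hwD : w ᵥ* (↑g : Matrix (Fin n) (Fin n) F) = r := by
    funext j
    show w ⬝ᵥ (fun i => (↑g : Matrix (Fin n) (Fin n) F) i j) = r j
    have he : (fun i => (↑g : Matrix (Fin n) (Fin n) F) i j) = b j := by
      funext i
      rw [hg, Basis.toMatrix_apply, Pi.basisFun_repr]
    rw [he]; exact h2 j
  refine MulAction.mem_orbit_iff.mpr ⟨g, ?_⟩
  rw [glsmul_def]
  refine Prod.ext ?_ ?_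
  · show (↑g : Matrix (Fin n) (Fin n) F) *ᵥ x = v
    rw [hg, h1]
  · show r ᵥ* (↑g⁻¹ : Matrix (Fin n) (Fin n) F) = w
    rw [← hwD, vecMul_vecMul, Units.mul_inv, vecMul_one]

lemma orbit_invariants {p p' : (Fin n → F) × (Fin n → F)}
    (h : p' ∈ MulAction.orbit (GL (Fin n) F) p) :
    (p'.1 = 0 ↔ p.1 = 0) ∧ (p'.2 = 0 ↔ p.2 = 0) ∧ p'.2 ⬝ᵥ p'.1 = p.2 ⬝ᵥ p.1 := by
  rw [MulAction.mem_orbit_iff] at h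
  obtain ⟨g, rfl⟩ := h
  rw [glsmul_def]
  refine ⟨⟨fun h0 => ?_, fun h0 => by rw [h0, mulVec_zero]⟩,
    ⟨fun h0 => ?_, fun h0 => by rw [h0, zero_vecMul]⟩, ?_⟩
  · have h1 := congrArg (fun u => (↑g⁻¹ : Matrix (Fin n) (Fin n) F) *ᵥ u) h0
    simp only [mulVec_zero, mulVec_mulVec, ← Units.val_mul, inv_mul_cancel,
      Units.val_one, one_mulVec] at h1
    exact h1
  · have h1 := congrArg (fun u => u ᵥ* (↑g : Matrix (Fin n) (Fin n) F)) h0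
    simp only [zero_vecMul, vecMul_vecMul, ← Units.val_mul, inv_mul_cancel,
      Units.val_one, vecMul_one] at h1
    exact h1
  · show (p.2 ᵥ* (↑g⁻¹ : Matrix (Fin n) (Fin n) F)) ⬝ᵥ ((↑g : Matrix (Fin n) (Fin n) F) *ᵥ p.1)
      = p.2 ⬝ᵥ p.1
    rw [dotProduct_mulVec, vecMul_vecMul, ← Units.val_mul, inv_mul_cancel,
      Units.val_one, vecMul_one]

end withFintype
end aux


section classify
variable {F : Type} [Field F] [Fintype F] {n : ℕ}
open Module

lemma single_ne_zero' (i : Fin n) : (Pi.single i (1:F) : Fin n → F) ≠ 0 := by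
  intro h
  have := congrFun h i
  rw [Pi.single_eq_same, Pi.zero_apply] at this
  exact one_ne_zero this

lemma classify_zero_w (hn : 0 < n) {w : Fin n → F} (hw : w ≠ 0) :
    ((0, w) : (Fin n → F) × (Fin n → F)) ∈
      MulAction.orbit (GL (Fin n) F)
        ((0 : Fin n → F), (Pi.single ⟨0, hn⟩ (1:F) : Fin n → F)) := by
  obtain ⟨z, hz⟩ := exists_dot_one hw
  have hz' : w ⬝ᵥ z ≠ 0 := by rw [hz]; exact one_ne_zero
  obtain ⟨b, hb0, hbj⟩ := basis_case_A hn hz'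
  refine mem_orbit_mk b 0 0 (Pi.single ⟨0, hn⟩ 1) w (by rw [mulVec_zero]) ?_
  intro j
  by_cases hj : j = ⟨0, hn⟩
  · subst hj; rw [hb0, hz, Pi.single_eq_same]
  · rw [hbj j (fun h => hj (Fin.ext h)), Pi.single_eq_of_ne hj]

lemma classify_v_zero (hn : 0 < n) {v : Fin n → F} (hv : v ≠ 0) :
    ((v, 0) : (Fin n → F) × (Fin n → F)) ∈
      MulAction.orbit (GL (Fin n) F)
        ((Pi.single ⟨0, hn⟩ (1:F) : Fin n → F), (0 : Fin n → F)) := by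
  obtain ⟨b, hb0⟩ := basis_case_C hn hv
  refine mem_orbit_mk b (Pi.single ⟨0, hn⟩ 1) v 0 0
    (by rw [toMatrix_mulVec_single, hb0]) ?_
  intro j
  rw [zero_dotProduct, Pi.zero_apply]

lemma classify_vw_ne (hn : 0 < n) {v w : Fin n → F} (hvw : w ⬝ᵥ v ≠ 0) :
    ((v, w) : (Fin n → F) × (Fin n → F)) ∈
      MulAction.orbit (GL (Fin n) F)
        ((Pi.single ⟨0, hn⟩ (1:F) : Fin n → F),
          (w ⬝ᵥ v) • (Pi.single ⟨0, hn⟩ (1:F) : Fin n → F)) := by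
  obtain ⟨b, hb0, hbj⟩ := basis_case_A hn hvw
  refine mem_orbit_mk b (Pi.single ⟨0, hn⟩ 1) v _ w
    (by rw [toMatrix_mulVec_single, hb0]) ?_
  intro j
  by_cases hj : j = ⟨0, hn⟩
  · subst hj
    rw [hb0, Pi.smul_apply, Pi.single_eq_same, smul_eq_mul, mul_one]
  · rw [hbj j (fun h => hj (Fin.ext h)), Pi.smul_apply, Pi.single_eq_of_ne hj,
      smul_eq_mul, mul_zero]

lemma classify_vw_zero (hn : 2 ≤ n) {v w : Fin n → F} (hv : v ≠ 0) (hw : w ≠ 0)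
    (hvw : w ⬝ᵥ v = 0) :
    ((v, w) : (Fin n → F) × (Fin n → F)) ∈
      MulAction.orbit (GL (Fin n) F)
        ((Pi.single ⟨0, by omega⟩ (1:F) : Fin n → F),
          (Pi.single ⟨1, by omega⟩ (1:F) : Fin n → F)) := by
  obtain ⟨b, hb0, hb1, hbj⟩ := basis_case_B hn hw hv hvw
  refine mem_orbit_mk b (Pi.single ⟨0, by omega⟩ 1) v _ w
    (by rw [toMatrix_mulVec_single, hb0]) ?_
  intro j
  by_cases hj0 : j = (⟨0, by omega⟩ : Fin n)
  · subst hj0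
    rw [hb0, hvw, Pi.single_eq_of_ne]
    exact Fin.ne_of_val_ne (by simp)
  · by_cases hj1 : j = (⟨1, by omega⟩ : Fin n)
    · subst hj1
      rw [hb1, Pi.single_eq_same]
    · rw [hbj j (fun h => hj0 (Fin.ext h)) (fun h => hj1 (Fin.ext h)),
        Pi.single_eq_of_ne hj1]

open scoped Classical in
/-- the complete invariant of the action. -/
noncomputable def invt (p : (Fin n → F) × (Fin n → F)) : Fin 3 ⊕ F :=
  if p.1 = 0 then (if p.2 = 0 then Sum.inl 0 else Sum.inl 1)
  else (if p.2 = 0 then Sum.inl 2 else Sum.inr (p.2 ⬝ᵥ p.1))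

lemma invt_orbit {p p' : (Fin n → F) × (Fin n → F)}
    (h : p' ∈ MulAction.orbit (GL (Fin n) F) p) : invt p' = invt p := by
  obtain ⟨h1, h2, h3⟩ := orbit_invariants h
  unfold invt
  by_cases ha : p.1 = 0 <;> by_cases hb : p.2 = 0
  · simp [ha, hb, h1.mpr ha, h2.mpr hb]
  · simp [ha, hb, h1.mpr ha, (not_congr h2).mpr hb]
  · simp [ha, hb, (not_congr h1).mpr ha, h2.mpr hb]
  · simp [ha, hb, (not_congr h1).mpr ha, (not_congr h2).mpr hb, h3]

lemma smul_single_ne_zero {c : F} (hc : c ≠ 0) (i : Fin n) :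
    c • (Pi.single i (1:F) : Fin n → F) ≠ 0 := by
  intro h
  have := congrFun h i
  rw [Pi.smul_apply, Pi.single_eq_same, Pi.zero_apply, smul_eq_mul, mul_one] at this
  exact hc this

open scoped Classical in
/-- canonical representatives for each value of the invariant. -/
noncomputable def rep (hn : 2 ≤ n) : Fin 3 ⊕ F → (Fin n → F) × (Fin n → F) :=
  Sum.elim
    ![((0 : Fin n → F), (0 : Fin n → F)),
      ((0 : Fin n → F), (Pi.single ⟨0, by omega⟩ (1:F) : Fin n → F)),
      ((Pi.single ⟨0, by omega⟩ (1:F) : Fin n → F), (0 : Fin n → F))]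
    (fun c => if c = 0 then
        ((Pi.single ⟨0, by omega⟩ (1:F) : Fin n → F),
          (Pi.single ⟨1, by omega⟩ (1:F) : Fin n → F))
      else ((Pi.single ⟨0, by omega⟩ (1:F) : Fin n → F),
          c • (Pi.single ⟨0, by omega⟩ (1:F) : Fin n → F)))

lemma orbit_rep (hn : 2 ≤ n) (a : (Fin n → F) × (Fin n → F)) :
    a ∈ MulAction.orbit (GL (Fin n) F) (rep hn (invt a)) := by
  have hn0 : 0 < n := by omega
  have ha : a = (a.1, a.2) := rfl
  by_cases ha1 : a.1 = 0 <;> by_cases ha2 : a.2 = 0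
  · rw [show invt a = Sum.inl 0 by simp [invt, ha1, ha2]]
    rw [show a = ((0 : Fin n → F), (0 : Fin n → F)) from Prod.ext ha1 ha2]
    exact MulAction.mem_orbit_self _
  · rw [show invt a = Sum.inl 1 by simp [invt, ha1, ha2]]
    rw [show a = ((0 : Fin n → F), a.2) from Prod.ext ha1 rfl]
    exact classify_zero_w hn0 ha2
  · rw [show invt a = Sum.inl 2 by simp [invt, ha1, ha2]]
    rw [show a = (a.1, (0 : Fin n → F)) from Prod.ext rfl ha2]
    exact classify_v_zero hn0 ha1
  · rw [show invt a = Sum.inr (a.2 ⬝ᵥ a.1) by simp [invt, ha1, ha2]]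
    by_cases hc : a.2 ⬝ᵥ a.1 = 0
    · rw [show rep hn (Sum.inr (a.2 ⬝ᵥ a.1))
          = ((Pi.single ⟨0, by omega⟩ (1:F) : Fin n → F),
            (Pi.single ⟨1, by omega⟩ (1:F) : Fin n → F)) by simp [rep, hc]]
      rw [ha]
      exact classify_vw_zero hn ha1 ha2 hc
    · rw [show rep hn (Sum.inr (a.2 ⬝ᵥ a.1))
          = ((Pi.single ⟨0, by omega⟩ (1:F) : Fin n → F),
            (a.2 ⬝ᵥ a.1) • (Pi.single ⟨0, by omega⟩ (1:F) : Fin n → F)) by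
            simp [rep, hc]]
      rw [ha]
      exact classify_vw_ne hn0 hc

lemma mem_orbit_of_invt (hn : 2 ≤ n) {a b : (Fin n → F) × (Fin n → F)}
    (h : invt a = invt b) : a ∈ MulAction.orbit (GL (Fin n) F) b := by
  have hA := orbit_rep hn a
  have hB := orbit_rep hn b
  rw [h] at hA
  rw [MulAction.orbit_eq_iff.mpr hB]
  exact hA

lemma invt_rep (hn : 2 ≤ n) (t : Fin 3 ⊕ F) : invt (rep hn t) = t := by
  have hne : (⟨1, by omega⟩ : Fin n) ≠ ⟨0, by omega⟩ := Fin.ne_of_val_ne (by simp)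
  rcases t with i | c
  · fin_cases i
    · simp [invt, rep]
    · simp [invt, rep, single_ne_zero']
    · simp [invt, rep, single_ne_zero']
  · by_cases hc : c = 0
    · subst hc
      simp [invt, rep, single_ne_zero', dotProduct_single, Pi.single_eq_of_ne hne]
    · simp [invt, rep, hc, single_ne_zero', smul_single_ne_zero hc, dotProduct_single,
        Pi.single_eq_same]

end classify

/-- The action of `GL_n(F_q)` on `F_q^n × F_q^n` given by `D • (v, wᵀ) = (Dv, wᵀD⁻¹)` has
exactly `q + 3` orbits, namely those of `(0,0)`, `(0,e₁ᵀ)`, `(e₁,0)`, `(e₁,e₂ᵀ)` and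
`(e₁, u·e₁ᵀ)` for `u ∈ F_qˣ`. -/
theorem gl_pair_action_orbits (F : Type) [Field F] [Fintype F]
    (q n : ℕ) (hq : Fintype.card F = q) (hn : 2 ≤ n) :
    Nat.card (MulAction.orbitRel.Quotient (GL (Fin n) F) ((Fin n → F) × (Fin n → F)))
      = q + 3 ∧
    ∀ p : (Fin n → F) × (Fin n → F),
      p ∈ MulAction.orbit (GL (Fin n) F) ((0, 0) : (Fin n → F) × (Fin n → F)) ∨
      p ∈ MulAction.orbit (GL (Fin n) F)
        ((0, Pi.single ⟨0, by omega⟩ 1) : (Fin n → F) × (Fin n → F)) ∨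
      p ∈ MulAction.orbit (GL (Fin n) F)
        ((Pi.single ⟨0, by omega⟩ 1, 0) : (Fin n → F) × (Fin n → F)) ∨
      p ∈ MulAction.orbit (GL (Fin n) F)
        ((Pi.single ⟨0, by omega⟩ 1, Pi.single ⟨1, by omega⟩ 1) :
          (Fin n → F) × (Fin n → F)) ∨
      ∃ u : F, u ≠ 0 ∧ p ∈ MulAction.orbit (GL (Fin n) F)
        (((Pi.single ⟨0, by omega⟩ 1 : Fin n → F),
          u • (Pi.single ⟨0, by omega⟩ 1 : Fin n → F))) := by
  
  have hn0 : 0 < n := by omega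
  constructor
  · let Q : MulAction.orbitRel.Quotient (GL (Fin n) F) ((Fin n → F) × (Fin n → F)) →
        Fin 3 ⊕ F :=
      Quotient.lift invt (fun a b hab => invt_orbit (MulAction.orbitRel_apply.mp hab))
    have hinj : Function.Injective Q := by
      refine fun x y => Quotient.inductionOn₂ x y ?_
      intro a b h
      exact Quotient.sound (MulAction.orbitRel_apply.mpr (mem_orbit_of_invt hn h))
    have hsurj : Function.Surjective Q := by
      intro t
      exact ⟨Quotient.mk _ (rep hn t), invt_rep hn t⟩
    have hcard := Nat.card_eq_of_bijective Q ⟨hinj, hsurj⟩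
    rw [hcard, Nat.card_eq_fintype_card, Fintype.card_sum, Fintype.card_fin, hq]
    omega
  · intro p
    by_cases h1 : p.1 = 0
    · by_cases h2 : p.2 = 0
      · left
        rw [show p = ((0, 0) : (Fin n → F) × (Fin n → F)) from Prod.ext h1 h2]
        exact MulAction.mem_orbit_self _
      · right; left
        rw [show p = ((0 : Fin n → F), p.2) from Prod.ext h1 rfl]
        exact classify_zero_w hn0 h2
    · by_cases h2 : p.2 = 0
      · right; right; left
        rw [show p = (p.1, (0 : Fin n → F)) from Prod.ext rfl h2]
        exact classify_v_zero hn0 h1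
      · by_cases h3 : p.2 ⬝ᵥ p.1 = 0
        · right; right; right; left
          rw [show p = (p.1, p.2) from rfl]
          exact classify_vw_zero hn h1 h2 h3
        · right; right; right; right
          refine ⟨p.2 ⬝ᵥ p.1, h3, ?_⟩
          rw [show p = (p.1, p.2) from rfl]
          exact classify_vw_ne hn0 h3
end
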